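/- arXiv:1303.4979 — 9 statements merged into one kernel-verified Lean document; each statement's English description precedes it below -/
import Mathlib

section
/- For every positive integer k and every p ∈ (0,1), the sequence p_{k,n} satisfies p_{k,n} ~ α_k·(2πn)^{-β_k} as n → ∞, where α_k = (p(1-p))^{(-1/2)^k} and β_k = (1-(-1/2)^k)/3; that is, lim_{n→∞} p_{k,n} / (α_k·(2πn)^{-β_k}) = 1. -/
open Real Filter Topology

/-- Generalized binomial coefficient `binom(n, α) = n! / (Γ(α+1)·Γ(n-α+1))`. -/
noncomputable def gbinom (n : ℕ) (a : ℝ) : ℝ :=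
  (n.factorial : ℝ) / (Real.Gamma (a + 1) * Real.Gamma ((n : ℝ) - a + 1))

/-- The function `P_n(p) = binom(n, np) · p^(np) · (1-p)^(n(1-p))`. -/
noncomputable def Pn (n : ℕ) (p : ℝ) : ℝ :=
  gbinom n ((n : ℝ) * p) * p ^ ((n : ℝ) * p) * (1 - p) ^ ((n : ℝ) * (1 - p))

/-! Stirling's formula for `n!` extends to `Γ(x + 1)` along the reals, because `log Γ` is convex
and so is squeezed between its values at consecutive integers. Hence
`P_n(q) ~ (2πnq(1-q))^(-1/2)` as soon as `nq → ∞` and `n(1-q) → ∞`. For `q = p` this gives the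
first iterate `(p(1-p))^(-1/2) (2πn)^(-1/2)`. An iterate `~ α(2πn)^(-β)` with `0 < β < 1` tends
to `0` while `n` times it tends to `∞`, so the next iterate is `~ α^(-1/2) (2πn)^(-(1-β)/2)`, and
the recursions `α ↦ α^(-1/2)`, `β ↦ (1-β)/2` have the closed forms `α_k`, `β_k`. -/

open Asymptotics

-- the logarithm of Stirling's approximation `√(2πx) (x/e)^x` to `Γ(x + 1)`
noncomputable def logStirling (x : ℝ) : ℝ := x * log x - x + log (2 * π * x) / 2

noncomputable def stirlingRemainder (x : ℝ) : ℝ := log (Gamma (x + 1)) - logStirling x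

lemma tendsto_stirlingRemainder_natCast :
    Tendsto (fun n : ℕ => stirlingRemainder n) atTop (𝓝 0) := by
  have hne : ∀ᶠ n : ℕ in atTop, √(2 * n * π) * (n / exp 1) ^ n ≠ 0 := by
    filter_upwards [eventually_ge_atTop 1] with n hn
    have : (0 : ℝ) < n := by exact_mod_cast hn
    positivity
  have h := (isEquivalent_iff_tendsto_one hne).1 Stirling.factorial_isEquivalent_stirling
  have hlog := (continuousAt_log one_ne_zero).tendsto.comp h
  rw [log_one] at hlog
  refine hlog.congr' ?_
  filter_upwards [eventually_ge_atTop 1] with n hn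
  have hn : (0 : ℝ) < n := by exact_mod_cast hn
  have hfac : (0 : ℝ) < n.factorial := by exact_mod_cast n.factorial_pos
  simp only [Function.comp_apply, Pi.div_apply, stirlingRemainder, logStirling,
    Gamma_nat_eq_factorial]
  rw [log_div hfac.ne' (by positivity), log_mul (by positivity) (by positivity),
    log_sqrt (by positivity), log_pow, log_div hn.ne' (exp_ne_zero 1), log_exp,
    mul_right_comm 2 (n : ℝ) π]
  ring

lemma log_Gamma_nat_add_one_add_mem_Icc {n : ℕ} (hn : n ≠ 0) {s : ℝ} (hs0 : 0 ≤ s)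
    (hs1 : s ≤ 1) :
    log (Gamma (n + 1 + s)) ∈
      Set.Icc (log (Gamma (n + 1)) + s * log n) (log (Gamma (n + 1)) + s * log (n + 1)) := by
  rcases hs0.eq_or_lt with rfl | hs
  · simp
  have feq : ∀ {y : ℝ}, 0 < y → (log ∘ Gamma) (y + 1) = (log ∘ Gamma) y + log y := fun hy => by
    simp [Gamma_add_one hy.ne', log_mul hy.ne' (Gamma_pos_of_pos hy).ne', add_comm]
  have hge := BohrMollerup.f_add_nat_ge convexOn_log_Gamma feq (n := n + 1) (by omega) hs
  have hle := BohrMollerup.f_add_nat_le convexOn_log_Gamma feq (n := n + 1) (by omega) hs hs1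
  push_cast at hge hle
  simp only [Function.comp_apply, add_sub_cancel_right] at hge hle
  exact ⟨hge, hle⟩

lemma logStirling_add_sub_mem_Icc {a s : ℝ} (ha : 0 < a) (hs0 : 0 ≤ s) (hs1 : s ≤ 1) :
    logStirling (a + s) - logStirling a - s * log a ∈ Set.Icc 0 (2 / a) := by
  have has : 0 < a + s := by linarith
  set L := log (a + s) - log a with hL
  have hL_lo : s ≤ (a + s) * L := by
    have h := log_le_sub_one_of_pos (div_pos ha has)
    rw [log_div ha.ne' has.ne'] at h
    have : (a + s) * (a / (a + s) - 1) = -s := by field_simp; ring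
    nlinarith
  have hL_hi : a * L ≤ s := by
    have h := log_le_sub_one_of_pos (div_pos has ha)
    rw [log_div has.ne' ha.ne'] at h
    have : a * ((a + s) / a - 1) = s := by field_simp; ring
    nlinarith
  have hE : logStirling (a + s) - logStirling a - s * log a = (a + s) * L - s + L / 2 := by
    simp only [logStirling, hL, log_mul (by positivity : 2 * π ≠ 0) has.ne',
      log_mul (by positivity : 2 * π ≠ 0) ha.ne']
    ring
  rw [hE, Set.mem_Icc, le_div_iff₀ ha]
  constructor <;> nlinarith

lemma abs_stirlingRemainder_sub_floor_le {x : ℝ} (hx : 1 ≤ x) :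
    |stirlingRemainder x - stirlingRemainder ⌊x⌋₊| ≤ 2 / ⌊x⌋₊ := by
  set n := ⌊x⌋₊
  have hn : 1 ≤ n := Nat.le_floor (by simpa using hx)
  have hn0 : (0 : ℝ) < n := by exact_mod_cast hn
  set s := x - n
  have hs0 : 0 ≤ s := sub_nonneg.2 (Nat.floor_le (by linarith))
  have hs1 : s ≤ 1 := by linarith [Nat.lt_floor_add_one x]
  have hxs : x = n + s := by ring
  obtain ⟨hΓ_lo, hΓ_hi⟩ := log_Gamma_nat_add_one_add_mem_Icc (by omega : n ≠ 0) hs0 hs1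
  obtain ⟨hS_lo, hS_hi⟩ := logStirling_add_sub_mem_Icc hn0 hs0 hs1
  have hlog : s * log (n + 1) ≤ s * log n + 1 / n := by
    have h := log_le_sub_one_of_pos (by positivity : (0 : ℝ) < (n + 1) / n)
    rw [log_div (by positivity) hn0.ne'] at h
    have : ((n : ℝ) + 1) / n - 1 = 1 / n := by field_simp; ring
    have hmono : log n ≤ log (n + 1) := log_le_log hn0 (by linarith)
    nlinarith
  have h12 : 1 / (n : ℝ) ≤ 2 / n := by gcongr; norm_num
  rw [abs_le, stirlingRemainder, stirlingRemainder, hxs, add_right_comm]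
  constructor <;> linarith

lemma tendsto_stirlingRemainder : Tendsto stirlingRemainder atTop (𝓝 0) := by
  have hfloor := tendsto_nat_floor_atTop (α := ℝ)
  have hdiff : Tendsto (fun x => stirlingRemainder x - stirlingRemainder ⌊x⌋₊) atTop (𝓝 0) :=
    squeeze_zero_norm' (by filter_upwards [eventually_ge_atTop 1] with x hx
        using abs_stirlingRemainder_sub_floor_le hx)
      ((tendsto_const_div_atTop_nhds_zero_nat 2).comp hfloor)
  simpa using hdiff.add (tendsto_stirlingRemainder_natCast.comp hfloor)

lemma Pn_eq_exp_mul_rpow {n : ℕ} (hn : n ≠ 0) {q : ℝ} (hq : q ∈ Set.Ioo 0 1) :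
    Pn n q = exp (stirlingRemainder n - stirlingRemainder (n * q) -
      stirlingRemainder (n * (1 - q))) * (2 * π * n * q * (1 - q)) ^ (-1/2 : ℝ) := by
  obtain ⟨hq0, hq1⟩ := hq
  have hn : (0 : ℝ) < n := by exact_mod_cast Nat.pos_of_ne_zero hn
  have h1q : 0 < 1 - q := sub_pos.2 hq1
  have hfac : (0 : ℝ) < n.factorial := by exact_mod_cast n.factorial_pos
  have hΓ₁ : 0 < Gamma (n * q + 1) := Gamma_pos_of_pos (by positivity)
  have hΓ₂ : 0 < Gamma (n * (1 - q) + 1) := Gamma_pos_of_pos (by positivity)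
  have hPn : 0 < Pn n q := by
    simp only [Pn, gbinom, show (n : ℝ) - n * q + 1 = n * (1 - q) + 1 by ring]
    positivity
  rw [rpow_def_of_pos (by positivity), ← exp_add, ← exp_log hPn]
  congr 1
  simp only [Pn, gbinom, stirlingRemainder, logStirling, Gamma_nat_eq_factorial,
    show (n : ℝ) - n * q + 1 = n * (1 - q) + 1 by ring]
  rw [log_mul (by positivity) (by positivity), log_mul (by positivity) (by positivity),
    log_div (by positivity) (by positivity), log_mul (by positivity) (by positivity),
    log_rpow hq0, log_rpow h1q]
  have h2π : 0 < 2 * π := by positivity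
  have hnq : log (n * q) = log n + log q := log_mul hn.ne' hq0.ne'
  have hn1q : log (n * (1 - q)) = log n + log (1 - q) := log_mul hn.ne' h1q.ne'
  have hX : log (2 * π * n * q * (1 - q)) = log (2 * π) + log n + log q + log (1 - q) := by
    rw [log_mul (by positivity) h1q.ne', log_mul (by positivity) hq0.ne', log_mul h2π.ne' hn.ne']
  rw [log_mul h2π.ne' hn.ne', log_mul h2π.ne' (by positivity), log_mul h2π.ne' (by positivity),
    hnq, hn1q, hX]
  ring

lemma Pn_isEquivalent {q : ℕ → ℝ} (h₁ : Tendsto (fun n : ℕ => n * q n) atTop atTop)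
    (h₂ : Tendsto (fun n : ℕ => n * (1 - q n)) atTop atTop) :
    (fun n => Pn n (q n)) ~[atTop] fun n => (2 * π * n * q n * (1 - q n)) ^ (-1/2 : ℝ) := by
  have hrem : Tendsto (fun n : ℕ => exp (stirlingRemainder n - stirlingRemainder (n * q n) -
      stirlingRemainder (n * (1 - q n)))) atTop (𝓝 1) := by
    have h := (tendsto_stirlingRemainder_natCast.sub (tendsto_stirlingRemainder.comp h₁)).sub
      (tendsto_stirlingRemainder.comp h₂)
    rw [sub_self, sub_zero] at h
    simpa [Function.comp_def] using (continuous_exp.tendsto 0).comp h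
  have hX : (fun n : ℕ => exp (stirlingRemainder n - stirlingRemainder (n * q n) -
      stirlingRemainder (n * (1 - q n))) * (2 * π * n * q n * (1 - q n)) ^ (-1/2 : ℝ)) ~[atTop]
      fun n => (2 * π * n * q n * (1 - q n)) ^ (-1/2 : ℝ) :=
    (((isEquivalent_const_iff_tendsto one_ne_zero).2 hrem).mul IsEquivalent.refl).congr_right
      (Eventually.of_forall fun n => one_mul _)
  refine hX.congr_left ?_
  filter_upwards [h₁.eventually_gt_atTop 0, h₂.eventually_gt_atTop 0, eventually_ne_atTop 0]
    with n hnq hn1q hn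
  have hn' : (0 : ℝ) ≤ n := n.cast_nonneg
  exact (Pn_eq_exp_mul_rpow hn ⟨pos_of_mul_pos_right hnq hn', by
    linarith [pos_of_mul_pos_right hn1q hn']⟩).symm

lemma Pn_const_isEquivalent {p : ℝ} (hp : p ∈ Set.Ioo 0 1) :
    (fun n => Pn n p) ~[atTop]
      fun n : ℕ => (p * (1 - p)) ^ (-1/2 : ℝ) * (2 * π * n) ^ (-1/2 : ℝ) := by
  have h1p : 0 < 1 - p := sub_pos.2 hp.2
  refine (Pn_isEquivalent (q := fun _ => p) (tendsto_natCast_atTop_atTop.atTop_mul_const hp.1)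
    (tendsto_natCast_atTop_atTop.atTop_mul_const h1p)).congr_right
    (Eventually.of_forall fun n => ?_)
  dsimp only
  rw [← mul_rpow (mul_pos hp.1 h1p).le (by positivity)]
  congr 1
  ring

lemma tendsto_two_pi_mul_natCast_atTop : Tendsto (fun n : ℕ => 2 * π * n) atTop atTop :=
  tendsto_natCast_atTop_atTop.const_mul_atTop (by positivity)

lemma Pn_isEquivalent_of_isEquivalent_rpow {q : ℕ → ℝ} {a b : ℝ} (ha : 0 < a) (hb0 : 0 < b)
    (hb1 : b < 1) (hq : q ~[atTop] fun n : ℕ => a * (2 * π * n) ^ (-b)) :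
    (fun n => Pn n (q n)) ~[atTop]
      fun n : ℕ => a ^ (-1/2 : ℝ) * (2 * π * n) ^ (-((1 - b) / 2)) := by
  have hrpow : ∀ᶠ n : ℕ in atTop, 2 * π * n * (2 * π * n) ^ (-b) = (2 * π * n) ^ (1 - b) := by
    filter_upwards [tendsto_two_pi_mul_natCast_atTop.eventually_gt_atTop 0] with n hn
    rw [sub_eq_add_neg, rpow_add hn, rpow_one]
  have hq0 : Tendsto q atTop (𝓝 0) := hq.symm.tendsto_nhds <| by
    simpa using ((tendsto_rpow_neg_atTop hb0).comp tendsto_two_pi_mul_natCast_atTop).const_mul a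
  have h1q : (fun n => 1 - q n) ~[atTop] fun _ => (1 : ℝ) :=
    (isEquivalent_const_iff_tendsto one_ne_zero).2 (by simpa using tendsto_const_nhds.sub hq0)
  have h₁ : Tendsto (fun n : ℕ => n * q n) atTop atTop := by
    refine ((IsEquivalent.refl (u := fun n : ℕ => (n : ℝ))).mul hq).symm.tendsto_atTop ?_
    refine (((tendsto_rpow_atTop (by linarith : 0 < 1 - b)).comp
      tendsto_two_pi_mul_natCast_atTop).const_mul_atTop (by positivity : 0 < a / (2 * π))).congr' ?_
    filter_upwards [hrpow] with n hn
    dsimp only [Function.comp_apply, Pi.mul_apply]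
    rw [← hn]
    field_simp
  have h₂ : Tendsto (fun n : ℕ => n * (1 - q n)) atTop atTop :=
    tendsto_natCast_atTop_atTop.atTop_mul_pos one_pos h1q.tendsto_const
  have hX : (fun n : ℕ => 2 * π * n * q n * (1 - q n)) ~[atTop]
      fun n : ℕ => a * (2 * π * n) ^ (1 - b) :=
    ((IsEquivalent.refl.mul hq).mul h1q).congr_right
      (by filter_upwards [hrpow] with n hn; rw [← hn]; dsimp only [Pi.mul_apply]; ring)
  refine (Pn_isEquivalent h₁ h₂).trans ((hX.rpow fun n => by positivity).congr_right
    (Eventually.of_forall fun n => ?_))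
  simp only [Pi.pow_apply]
  rw [mul_rpow ha.le (by positivity), ← rpow_mul (by positivity)]
  congr 2
  ring

lemma iterate_Pn_isEquivalent {p : ℝ} (hp : p ∈ Set.Ioo 0 1) {k : ℕ} (hk : 0 < k) :
    (fun n => (Pn n)^[k] p) ~[atTop] fun n : ℕ =>
      (p * (1 - p)) ^ ((-1/2 : ℝ) ^ k) * (2 * π * n) ^ (-((1 - (-1/2 : ℝ) ^ k) / 3)) := by
  have hpq : 0 < p * (1 - p) := mul_pos hp.1 (sub_pos.2 hp.2)
  induction k, hk using Nat.le_induction with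
  | base => convert Pn_const_isEquivalent hp using 4 <;> norm_num
  | succ k hk ih =>
    have he : |(-1/2 : ℝ) ^ k| ≤ 1/2 := by
      rw [abs_pow, show |(-1/2 : ℝ)| = 1/2 by norm_num]
      exact pow_le_of_le_one (by norm_num) (by norm_num) (by omega)
    obtain ⟨he₁, he₂⟩ := abs_le.1 he
    have := Pn_isEquivalent_of_isEquivalent_rpow (rpow_pos_of_pos hpq _) (by linarith)
      (by linarith) ih
    simp only [Function.iterate_succ_apply']
    convert this using 3 with n
    · rw [← rpow_mul hpq.le, pow_succ]
    · rw [pow_succ]; congr 1; ring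

/-- For every positive integer `k` and every `p ∈ (0,1)`,
`p_{k,n} ~ α_k·(2πn)^{-β_k}` as `n → ∞`, where `α_k = (p(1-p))^{(-1/2)^k}` and
`β_k = (1-(-1/2)^k)/3`. Here `p_{k,n} = (P_n)^[k] p`. -/
theorem expected_successes_k_fixed (k : ℕ) (hk : 0 < k) (p : ℝ) (hp : p ∈ Set.Ioo (0:ℝ) 1) :
    Tendsto
      (fun n : ℕ =>
        (Pn n)^[k] p /
          ((p * (1 - p)) ^ ((-1/2 : ℝ) ^ k) *
            (2 * π * n) ^ (-((1 - (-1/2 : ℝ) ^ k) / 3))))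
      atTop (𝓝 1) := by
  have hpq : 0 < p * (1 - p) := mul_pos hp.1 (sub_pos.2 hp.2)
  refine (isEquivalent_iff_tendsto_one ?_).1 (iterate_Pn_isEquivalent hp hk)
  filter_upwards [tendsto_two_pi_mul_natCast_atTop.eventually_gt_atTop 0] with n hn
  positivity
end

section
/- Let α > 0 and β ∈ (0,1), and let (q_n) be a sequence with q_n ∈ (0,1) for every positive integer n such that q_n ~ α·(2πn)^{-β} as n → ∞. Then P_n(q_n) ~ α^{-1/2}·(2πn)^{-(1-β)/2} as n → ∞. -/
/-
Let `E(x) = log Γ(x+1) - log (√(2πx) (x/e)^x)` be the error in Stirling's formula. The factors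
`(x/e)^x` cancel exactly against `p^(np) (1-p)^(n(1-p))`, so that
`log P_n(p) = E(n) - E(np) - E(n(1-p)) - log (2πn p (1-p)) / 2`.
Hence `P_n(p_n) ~ (2πn p_n (1-p_n))^(-1/2)` whenever `n p_n → ∞` and `n (1-p_n) → ∞`, and for
`q_n ~ α (2πn)^(-β)` with `0 < β < 1` both hold while `2πn q_n (1-q_n) ~ α (2πn)^(1-β)`.

That `E(x) → 0` along the reals follows from the integer case: by log-convexity of `Γ`, on
`[m, m+1]` the function `log Γ(x+1)` lies between the lines through `log m!` of slopes `log m` and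
`log (m+1)`, so `E` moves by `O(1/m)` there.
-/

open Real Filter Topology

open scoped Nat
open Asymptotics

noncomputable def logStirlingError (x : ℝ) : ℝ :=
  log (Gamma (x + 1)) - (log (2 * π * x) / 2 + x * log x - x)

lemma logStirlingError_natCast {n : ℕ} (hn : n ≠ 0) :
    logStirlingError n = log (Stirling.stirlingSeq n) - log π / 2 := by
  have hn' : (0 : ℝ) < n := by positivity
  rw [logStirlingError, Stirling.log_stirlingSeq_formula, Gamma_nat_eq_factorial,
    log_mul (by positivity) hn'.ne', log_mul two_ne_zero pi_ne_zero,
    log_mul two_ne_zero hn'.ne', log_div hn'.ne' (exp_ne_zero 1), log_exp]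
  ring

lemma tendsto_logStirlingError_natCast :
    Tendsto (fun n : ℕ => logStirlingError n) atTop (𝓝 0) := by
  have h := ((continuousAt_log (by positivity)).tendsto.comp
    Stirling.tendsto_stirlingSeq_sqrt_pi).sub_const (log π / 2)
  rw [log_sqrt pi_pos.le, sub_self] at h
  exact h.congr' <| (eventually_ne_atTop 0).mono fun n hn => (logStirlingError_natCast hn).symm

lemma sub_le_mul_log_sub_log {a b : ℝ} (ha : 0 < a) (hb : 0 < b) :
    b - a ≤ b * (log b - log a) := by
  have := one_sub_inv_le_log_of_pos (div_pos hb ha)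
  rwa [log_div hb.ne' ha.ne', inv_div, one_sub_div hb.ne', div_le_iff₀' hb] at this

lemma log_sub_log_le_sub_div {a b : ℝ} (ha : 0 < a) (hb : 0 < b) :
    log b - log a ≤ (b - a) / a := by
  have := log_le_sub_one_of_pos (div_pos hb ha)
  rwa [log_div hb.ne' ha.ne', div_sub_one ha.ne'] at this

lemma log_Gamma_add_one {y : ℝ} (hy : 0 < y) :
    log (Gamma (y + 1)) = log (Gamma y) + log y := by
  rw [Gamma_add_one hy.ne', log_mul hy.ne' (Gamma_pos_of_pos hy).ne', add_comm]

lemma log_Gamma_natCast_add_bounds {m : ℕ} (hm : m ≠ 0) {x : ℝ} (hx₀ : 0 ≤ x) (hx₁ : x ≤ 1) :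
    x * log m ≤ log (Gamma (m + x + 1)) - log m ! ∧
      log (Gamma (m + x + 1)) - log m ! ≤ x * log (m + 1) := by
  rcases hx₀.eq_or_lt with rfl | hx₀
  · simp [Gamma_nat_eq_factorial]
  have hfeq : ∀ {y : ℝ}, 0 < y → (log ∘ Gamma) (y + 1) = (log ∘ Gamma) y + log y :=
    fun hy => log_Gamma_add_one hy
  have hshift : (m : ℝ) + x + 1 = ((m + 1 : ℕ) : ℝ) + x := by push_cast; ring
  have hfac : (log ∘ Gamma) ((m + 1 : ℕ) : ℝ) = log m ! := by
    simp [Gamma_nat_eq_factorial]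
  have hle := BohrMollerup.f_add_nat_le convexOn_log_Gamma hfeq m.succ_ne_zero hx₀ hx₁
  have hge := BohrMollerup.f_add_nat_ge convexOn_log_Gamma hfeq (by omega : 2 ≤ m + 1) hx₀
  rw [hfac] at hle hge
  push_cast at hle hge
  rw [hshift]
  push_cast
  constructor <;> simp only [Function.comp_apply, add_sub_cancel_right] at hle hge <;> linarith

lemma abs_logStirlingError_natCast_add_sub_le {m : ℕ} (hm : m ≠ 0) {x : ℝ} (hx₀ : 0 ≤ x)
    (hx₁ : x ≤ 1) : |logStirlingError (m + x) - logStirlingError m| ≤ 2 / m := by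
  have hm₀ : (0 : ℝ) < m := by positivity
  have hy₀ : (0 : ℝ) < m + x := by positivity
  have hxm : x / m ≤ 1 / m := div_le_div_of_nonneg_right hx₁ hm₀.le
  obtain ⟨hΓ₀, hΓ₁⟩ := log_Gamma_natCast_add_bounds hm hx₀ hx₁
  have hΓ : log (Gamma (m + x + 1)) - log m ! - x * log m ≤ 1 / m := by
    have hstep : log (m + 1) - log m ≤ 1 / m := by
      simpa using log_sub_log_le_sub_div hm₀ (by positivity : (0 : ℝ) < m + 1)
    have := mul_le_mul_of_nonneg_left hstep hx₀
    rw [mul_one_div] at this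
    linarith
  have hlog₀ : 0 ≤ log (m + x) - log m := sub_nonneg.2 (log_le_log hm₀ (by linarith))
  have hlog₁ : log (m + x) - log m ≤ x / m := by simpa using log_sub_log_le_sub_div hm₀ hy₀
  have hmain₀ : 0 ≤ (m + x) * (log (m + x) - log m) - x := by
    simpa using sub_le_mul_log_sub_log hm₀ hy₀
  have hmain₁ : (m + x) * (log (m + x) - log m) - x ≤ 1 / m :=
    calc (m + x) * (log (m + x) - log m) - x ≤ (m + x) * (x / m) - x := by gcongr
      _ = x * x / m := by field_simp; ring
      _ ≤ 1 / m := div_le_div_of_nonneg_right (by nlinarith) hm₀.le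
  have hexpand : logStirlingError (m + x) - logStirlingError m =
      (log (Gamma (m + x + 1)) - log m ! - x * log m) - (log (m + x) - log m) / 2
        - ((m + x) * (log (m + x) - log m) - x) := by
    rw [logStirlingError, logStirlingError, Gamma_nat_eq_factorial,
      log_mul (by positivity) hy₀.ne', log_mul (by positivity) hm₀.ne']
    ring
  have hm₁ : 0 ≤ 1 / (m : ℝ) := by positivity
  rw [hexpand, abs_le, show (2 : ℝ) / m = 1 / m + 1 / m by ring]
  constructor <;> linarith

theorem tendsto_logStirlingError : Tendsto logStirlingError atTop (𝓝 0) := by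
  have hfloor : Tendsto (fun y : ℝ => logStirlingError ⌊y⌋₊) atTop (𝓝 0) :=
    tendsto_logStirlingError_natCast.comp tendsto_nat_floor_atTop
  have hbound : Tendsto (fun y : ℝ => 2 / (⌊y⌋₊ : ℝ)) atTop (𝓝 0) :=
    tendsto_const_nhds.div_atTop (tendsto_natCast_atTop_atTop.comp tendsto_nat_floor_atTop)
  have hdiff : Tendsto (fun y => logStirlingError y - logStirlingError ⌊y⌋₊) atTop (𝓝 0) := by
    refine squeeze_zero_norm' ?_ hbound
    filter_upwards [eventually_ge_atTop 1] with y hy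
    have hm : ⌊y⌋₊ ≠ 0 := (Nat.floor_pos.2 hy).ne'
    have hx₀ : 0 ≤ y - ⌊y⌋₊ := sub_nonneg.2 (Nat.floor_le (by linarith))
    have hx₁ : y - ⌊y⌋₊ ≤ 1 := by linarith [Nat.lt_floor_add_one y]
    simpa using abs_logStirlingError_natCast_add_sub_le hm hx₀ hx₁
  simpa using hfloor.add hdiff

lemma Pn_pos {n : ℕ} {p : ℝ} (hp₀ : 0 < p) (hp₁ : p < 1) : 0 < Pn n p := by
  have hq₀ : 0 < 1 - p := by linarith
  have hΓu := Gamma_pos_of_pos (by positivity : (0 : ℝ) < n * p + 1)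
  have hΓv := Gamma_pos_of_pos (by positivity : (0 : ℝ) < n * (1 - p) + 1)
  rw [Pn, gbinom, show (n : ℝ) - n * p + 1 = n * (1 - p) + 1 by ring]
  positivity

lemma log_Pn {n : ℕ} (hn : 0 < n) {p : ℝ} (hp₀ : 0 < p) (hp₁ : p < 1) :
    log (Pn n p) = logStirlingError n - logStirlingError (n * p)
      - logStirlingError (n * (1 - p)) - log (2 * π * n * p * (1 - p)) / 2 := by
  have hn' : (0 : ℝ) < n := by exact_mod_cast hn
  have hq₀ : 0 < 1 - p := by linarith
  have hu : (0 : ℝ) < n * p := by positivity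
  have hv : (0 : ℝ) < n * (1 - p) := by positivity
  have hΓu := Gamma_pos_of_pos (by positivity : (0 : ℝ) < n * p + 1)
  have hΓv := Gamma_pos_of_pos (by positivity : (0 : ℝ) < n * (1 - p) + 1)
  have hlog (x : ℝ) (hx : 0 < x) : log (2 * π * x) = log (2 * π) + log x :=
    log_mul (by positivity) hx.ne'
  unfold Pn gbinom logStirlingError
  rw [show (n : ℝ) - n * p + 1 = n * (1 - p) + 1 by ring, ← Gamma_nat_eq_factorial,
    show 2 * π * n * p * (1 - p) = 2 * π * (n * (p * (1 - p))) by ring,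
    log_mul (by positivity) (by positivity), log_mul (by positivity) (by positivity),
    log_div (Gamma_pos_of_pos (by positivity)).ne' (by positivity),
    log_mul hΓu.ne' hΓv.ne', log_rpow hp₀, log_rpow hq₀, hlog n hn', hlog _ hu, hlog _ hv,
    hlog _ (by positivity), log_mul hn'.ne' hp₀.ne', log_mul hn'.ne' hq₀.ne',
    log_mul hn'.ne' (by positivity), log_mul hp₀.ne' hq₀.ne']
  ring

theorem tendsto_log_Pn_add_half_log {p : ℕ → ℝ}
    (h₀ : Tendsto (fun n : ℕ => n * p n) atTop atTop)
    (h₁ : Tendsto (fun n : ℕ => n * (1 - p n)) atTop atTop) :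
    Tendsto (fun n : ℕ => log (Pn n (p n)) + log (2 * π * n * p n * (1 - p n)) / 2)
      atTop (𝓝 0) := by
  have hlim := ((tendsto_logStirlingError.comp tendsto_natCast_atTop_atTop).sub
    (tendsto_logStirlingError.comp h₀)).sub (tendsto_logStirlingError.comp h₁)
  simp only [sub_zero] at hlim
  refine hlim.congr' ?_
  filter_upwards [eventually_gt_atTop 0, h₀.eventually_gt_atTop 0, h₁.eventually_gt_atTop 0]
    with n hn hu hv
  have hn' : (0 : ℝ) < n := by exact_mod_cast hn
  rw [Function.comp_apply, Function.comp_apply, Function.comp_apply,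
    log_Pn hn (pos_of_mul_pos_right hu hn'.le) (by nlinarith)]
  ring

lemma tendsto_natCast_mul_const_mul_rpow_neg {a β : ℝ} (ha : 0 < a) (hβ : β < 1) :
    Tendsto (fun n : ℕ => n * (a * (2 * π * n) ^ (-β))) atTop atTop := by
  have h2πn : Tendsto (fun n : ℕ => 2 * π * n) atTop atTop :=
    tendsto_natCast_atTop_atTop.const_mul_atTop (by positivity)
  refine (((tendsto_rpow_atTop (sub_pos.2 hβ)).comp h2πn).const_mul_atTop
    (by positivity : 0 < a / (2 * π))).congr' ?_
  filter_upwards [eventually_gt_atTop 0] with n hn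
  have hc : (0 : ℝ) < 2 * π * n := by positivity
  rw [Function.comp_apply, sub_eq_add_neg, rpow_add hc, rpow_one]
  field_simp

lemma tendsto_nhds_one_of_tendsto_log {ι : Type*} {l : Filter ι} {f : ι → ℝ}
    (hf : ∀ᶠ i in l, 0 < f i) (h : Tendsto (fun i => log (f i)) l (𝓝 0)) :
    Tendsto f l (𝓝 1) := by
  have hexp := (continuous_exp.tendsto 0).comp h
  rw [exp_zero] at hexp
  exact hexp.congr' (hf.mono fun i hi => exp_log hi)

lemma log_div_rpow_neg_half_mul_rpow {P a c p : ℝ} (β : ℝ) (hP : 0 < P) (ha : 0 < a)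
    (hc : 0 < c) (hp₀ : 0 < p) (hp₁ : p < 1) :
    log (P / (a ^ (-(1/2 : ℝ)) * c ^ (-((1 - β) / 2)))) = log P + log (c * p * (1 - p)) / 2
      - log (1 - p) / 2 - log (p / (a * c ^ (-β))) / 2 := by
  have hq : 0 < 1 - p := by linarith
  rw [log_div hP.ne' (by positivity),
    log_mul (rpow_pos_of_pos ha _).ne' (rpow_pos_of_pos hc _).ne', log_rpow ha, log_rpow hc,
    log_mul (mul_pos hc hp₀).ne' hq.ne', log_mul hc.ne' hp₀.ne',
    log_div hp₀.ne' (by positivity), log_mul ha.ne' (rpow_pos_of_pos hc _).ne', log_rpow hc]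
  ring

/-- If `α > 0`, `β ∈ (0,1)`, and `q_n ∈ (0,1)` with `q_n ~ α·(2πn)^{-β}`, then
`P_n(q_n) ~ α^{-1/2}·(2πn)^{-(1-β)/2}` as `n → ∞`. -/
theorem asymptotic_iteration_step (a β : ℝ) (ha : 0 < a) (hβ : β ∈ Set.Ioo (0:ℝ) 1)
    (q : ℕ → ℝ) (hq : ∀ n : ℕ, 0 < n → q n ∈ Set.Ioo (0:ℝ) 1)
    (hasym : Tendsto (fun n : ℕ => q n / (a * (2 * π * n) ^ (-β))) atTop (𝓝 1)) :
    Tendsto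
      (fun n : ℕ => Pn n (q n) / (a ^ (-(1/2 : ℝ)) * (2 * π * n) ^ (-((1 - β) / 2))))
      atTop (𝓝 1) := by
  have hqd : q ~[atTop] fun n : ℕ => a * (2 * π * n) ^ (-β) := isEquivalent_of_tendsto_one hasym
  have hq₀ : Tendsto q atTop (𝓝 0) := hqd.symm.tendsto_nhds <| by
    simpa using ((tendsto_rpow_neg_atTop hβ.1).comp <|
      tendsto_natCast_atTop_atTop.const_mul_atTop (by positivity : 0 < 2 * π)).const_mul a
  have hnq : Tendsto (fun n : ℕ => n * q n) atTop atTop :=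
    (IsEquivalent.refl.mul hqd).symm.tendsto_atTop
      (tendsto_natCast_mul_const_mul_rpow_neg ha hβ.2)
  have h1q : Tendsto (fun n => 1 - q n) atTop (𝓝 1) := by simpa using hq₀.const_sub 1
  have hn1q : Tendsto (fun n : ℕ => n * (1 - q n)) atTop atTop :=
    tendsto_natCast_atTop_atTop.atTop_mul_pos one_pos h1q
  have hlog := ((tendsto_log_Pn_add_half_log hnq hn1q).sub
    ((h1q.log one_ne_zero).div_const 2)).sub ((hasym.log one_ne_zero).div_const 2)
  rw [log_one, zero_div, sub_zero, sub_zero] at hlog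
  have hpos : ∀ᶠ n : ℕ in atTop, 0 < n ∧ 0 < Pn n (q n) := by
    filter_upwards [eventually_gt_atTop 0] with n hn
    exact ⟨hn, Pn_pos (hq n hn).1 (hq n hn).2⟩
  refine tendsto_nhds_one_of_tendsto_log
    (hpos.mono fun n ⟨hn, hP⟩ => div_pos hP (by positivity)) (hlog.congr' ?_)
  filter_upwards [hpos] with n ⟨hn, hP⟩
  exact (log_div_rpow_neg_half_mul_rpow β hP ha (by positivity) (hq n hn).1 (hq n hn).2).symm
end

section
/- Let p_n ∈ (0,1) denote the unique fixed point of P_n in (0,1), i.e. the unique solution of p_n = binom(n, n·p_n)·p_n^(n·p_n)·(1-p_n)^(n(1-p_n)). Then p_n ~ (2πn)^{-1/3} as n → ∞, i.e. lim_{n→∞} p_n·(2πn)^{1/3} = 1. -/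
open Real Filter Topology

/-
Write `Γ(x + 1) = R(x) · √(2πx) (x/e)^x`. Stirling's formula, extended from integers to real `x`
by log-convexity of `Γ`, says `R(x) → 1`, and the exponential factors in `P_n` cancel exactly:
`P_n(x) = R(n) / (R(nx) R(n(1 - x))) / √(2πn x(1 - x))`. At `x = c (2πn)^(-1/3)` this gives
`P_n(x) / x → c^(-3/2)`, so for `c₁ < 1 < c₂` the function `P_n - id` changes sign between
`c₁ (2πn)^(-1/3)` and `c₂ (2πn)^(-1/3)`; by the intermediate value theorem the unique fixed point
lies in between.
-/

open scoped Nat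

noncomputable def stirlingApprox (x : ℝ) : ℝ := √(2 * π * x) * (x / exp 1) ^ x

noncomputable def stirlingRatio (x : ℝ) : ℝ := Gamma (x + 1) / stirlingApprox x

lemma stirlingApprox_pos {x : ℝ} (hx : 0 < x) : 0 < stirlingApprox x := by
  unfold stirlingApprox; positivity

lemma stirlingRatio_pos {x : ℝ} (hx : 0 < x) : 0 < stirlingRatio x :=
  div_pos (Gamma_pos_of_pos (by linarith)) (stirlingApprox_pos hx)

lemma log_stirlingApprox {x : ℝ} (hx : 0 < x) :
    log (stirlingApprox x) = log (2 * π * x) / 2 + x * (log x - 1) := by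
  rw [stirlingApprox, log_mul (by positivity) (by positivity), log_sqrt (by positivity),
    log_rpow (by positivity), log_div hx.ne' (exp_pos 1).ne', log_exp]

lemma stirlingRatio_natCast (n : ℕ) : stirlingRatio n = Stirling.stirlingSeq n / √π := by
  rw [stirlingRatio, stirlingApprox, Stirling.stirlingSeq, Gamma_nat_eq_factorial, rpow_natCast,
    mul_comm 2 π, mul_assoc, sqrt_mul pi_pos.le]
  field_simp

lemma tendsto_stirlingRatio_natCast :
    Tendsto (fun n : ℕ => stirlingRatio n) atTop (𝓝 1) := by
  simp_rw [stirlingRatio_natCast]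
  simpa [(sqrt_pos.2 pi_pos).ne'] using
    Stirling.tendsto_stirlingSeq_sqrt_pi.div_const √π

lemma log_Gamma_nat_add_bounds {m : ℕ} (hm : m ≠ 0) {s : ℝ} (hs0 : 0 ≤ s) (hs1 : s ≤ 1) :
    s * log m ≤ log (Gamma (m + s + 1)) - log m ! ∧
      log (Gamma (m + s + 1)) - log m ! ≤ s * log (m + 1) := by
  rcases hs0.eq_or_lt with rfl | hs
  · simp [Gamma_nat_eq_factorial]
  have hfeq : ∀ {y : ℝ}, 0 < y → (log ∘ Gamma) (y + 1) = (log ∘ Gamma) y + log y := by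
    intro y hy
    rw [Function.comp_apply, Gamma_add_one hy.ne', log_mul hy.ne' (Gamma_pos_of_pos hy).ne',
      add_comm, Function.comp_apply]
  have hge := BohrMollerup.f_add_nat_ge convexOn_log_Gamma hfeq (n := m + 1) (by omega) hs
  have hle := BohrMollerup.f_add_nat_le convexOn_log_Gamma hfeq (n := m + 1) (by omega) hs hs1
  simp only [Function.comp_apply, Nat.cast_add, Nat.cast_one, Gamma_nat_eq_factorial,
    add_sub_cancel_right] at hge hle
  rw [add_right_comm] at hge hle
  constructor <;> linarith

lemma abs_log_stirlingRatio_nat_add_sub_le {m : ℕ} (hm : m ≠ 0) {s : ℝ} (hs0 : 0 ≤ s)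
    (hs1 : s ≤ 1) : |log (stirlingRatio (m + s)) - log (stirlingRatio m)| ≤ 2 / m := by
  have hm0 : (0 : ℝ) < m := by positivity
  have hx0 : (0 : ℝ) < m + s := by positivity
  obtain ⟨hθlo, hθhi⟩ := log_Gamma_nat_add_bounds hm hs0 hs1
  set u := log (m + s) - log m with hu
  have hu_lo : s ≤ (m + s) * u := by
    have := log_le_sub_one_of_pos (div_pos hm0 hx0)
    rw [log_div hm0.ne' hx0.ne', div_sub_one hx0.ne', le_div_iff₀ hx0] at this
    linarith
  have hu_hi : m * u ≤ s := by
    have := log_le_sub_one_of_pos (div_pos hx0 hm0)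
    rw [log_div hx0.ne' hm0.ne', div_sub_one hm0.ne', le_div_iff₀ hm0] at this
    linarith
  have hlog_succ : m * (log (m + 1) - log m) ≤ 1 := by
    have := log_le_sub_one_of_pos (div_pos (by positivity : (0 : ℝ) < m + 1) hm0)
    rw [log_div (by positivity) hm0.ne', div_sub_one hm0.ne', le_div_iff₀ hm0] at this
    linarith
  have hD : log (stirlingRatio (m + s)) - log (stirlingRatio m)
      = (log (Gamma (m + s + 1)) - log m ! - s * log m) - u / 2 - (m + s) * u + s := by
    rw [stirlingRatio, stirlingRatio, log_div (Gamma_pos_of_pos (by linarith)).ne'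
      (stirlingApprox_pos hx0).ne', log_div (Gamma_pos_of_pos (by linarith)).ne'
      (stirlingApprox_pos hm0).ne', log_stirlingApprox hx0, log_stirlingApprox hm0,
      Gamma_nat_eq_factorial, log_mul (by positivity) hx0.ne', log_mul (by positivity) hm0.ne', hu]
    ring
  -- The bracket lies in `[0, s / m]` and `s ≤ (m + s) u ≤ s + s² / m`, so the sum is `O(1 / m)`.
  rw [hD, abs_le, ← neg_div, div_le_iff₀ hm0, le_div_iff₀ hm0]
  have hu0 : 0 ≤ u := sub_nonneg.2 (log_le_log hm0 (by linarith))
  constructor <;> nlinarith [mul_le_mul_of_nonneg_left hu_hi hs0]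

theorem tendsto_stirlingRatio_atTop : Tendsto stirlingRatio atTop (𝓝 1) := by
  have hnat : Tendsto (fun x : ℝ => log (stirlingRatio ⌊x⌋₊)) atTop (𝓝 0) := by
    simpa [Function.comp_def] using ((continuousAt_log one_ne_zero).tendsto.comp
      tendsto_stirlingRatio_natCast).comp tendsto_nat_floor_atTop
  have hdiff : Tendsto (fun x : ℝ => log (stirlingRatio x) - log (stirlingRatio ⌊x⌋₊))
      atTop (𝓝 0) := by
    refine squeeze_zero_norm' ?_
      ((tendsto_const_div_atTop_nhds_zero_nat 2).comp tendsto_nat_floor_atTop)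
    filter_upwards [eventually_ge_atTop 1] with x hx
    have h := abs_log_stirlingRatio_nat_add_sub_le (Nat.floor_pos.2 hx).ne'
      (sub_nonneg.2 (Nat.floor_le (by linarith))) (by linarith [Nat.lt_floor_add_one x])
    rwa [add_sub_cancel] at h
  have hlog : Tendsto (fun x => log (stirlingRatio x)) atTop (𝓝 0) := by
    simpa using hnat.add hdiff
  have hexp : Tendsto (fun x => exp (log (stirlingRatio x))) atTop (𝓝 1) := by
    simpa [Function.comp_def] using (continuous_exp.tendsto 0).comp hlog
  refine hexp.congr' ?_
  filter_upwards [eventually_gt_atTop 0] with x hx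
  exact exp_log (stirlingRatio_pos hx)

lemma stirlingApprox_mul_stirlingApprox {a b : ℝ} (ha : 0 < a) (hb : 0 < b) :
    stirlingApprox a * stirlingApprox b = stirlingApprox (a + b) * (a / (a + b)) ^ a *
      (b / (a + b)) ^ b * √(2 * π * (a * b / (a + b))) := by
  have hab : 0 < a + b := add_pos ha hb
  have hpow (c : ℝ) (hc : 0 < c) :
      (c / exp 1) ^ c = ((a + b) / exp 1) ^ c * (c / (a + b)) ^ c := by
    rw [← mul_rpow (by positivity) (by positivity)]
    congr 1
    field_simp
  have hsqrt :
      √(2 * π * a) * √(2 * π * b) = √(2 * π * (a + b)) * √(2 * π * (a * b / (a + b))) := by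
    rw [← sqrt_mul (by positivity), ← sqrt_mul (by positivity)]
    congr 1
    field_simp
  simp only [stirlingApprox]
  rw [hpow a ha, hpow b hb, rpow_add (by positivity)]
  linear_combination ((a + b) / exp 1) ^ a * (a / (a + b)) ^ a * (((a + b) / exp 1) ^ b *
    (b / (a + b)) ^ b) * hsqrt

lemma Pn_eq_stirlingRatio {n : ℕ} (hn : n ≠ 0) {x : ℝ} (hx : x ∈ Set.Ioo 0 1) :
    Pn n x = stirlingRatio n / (stirlingRatio (n * x) * stirlingRatio (n * (1 - x))) /
      √(2 * π * (n * x * (1 - x))) := by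
  obtain ⟨hx0, hx1⟩ := hx
  have hn0 : (0 : ℝ) < n := by positivity
  have ha : 0 < (n : ℝ) * x := by positivity
  have hb : 0 < (n : ℝ) * (1 - x) := mul_pos hn0 (by linarith)
  have key := stirlingApprox_mul_stirlingApprox ha hb
  have hsum : (n : ℝ) * x + n * (1 - x) = n := by ring
  rw [hsum, mul_div_cancel_left₀ _ hn0.ne', mul_div_cancel_left₀ _ hn0.ne',
    show (n : ℝ) * x * (n * (1 - x)) / n = n * x * (1 - x) by field_simp] at key
  have hGa := Gamma_pos_of_pos (by linarith : 0 < (n : ℝ) * x + 1)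
  have hGb := Gamma_pos_of_pos (by linarith : 0 < (n : ℝ) * (1 - x) + 1)
  have hSa := stirlingApprox_pos ha
  have hSb := stirlingApprox_pos hb
  have hSn := stirlingApprox_pos hn0
  have hsq : 0 < √(2 * π * (n * x * (1 - x))) :=
    sqrt_pos.2 (by have := mul_pos ha hb; positivity)
  rw [Pn, gbinom, stirlingRatio, stirlingRatio, stirlingRatio, Gamma_nat_eq_factorial,
    show (n : ℝ) - n * x + 1 = n * (1 - x) + 1 by ring]
  field_simp
  rw [key]
  ring_nf

theorem tendsto_Pn_mul_sqrt {y : ℕ → ℝ} (h₀ : Tendsto (fun n => n * y n) atTop atTop)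
    (h₁ : Tendsto (fun n => n * (1 - y n)) atTop atTop) :
    Tendsto (fun n => Pn n (y n) * √(2 * π * (n * y n * (1 - y n)))) atTop (𝓝 1) := by
  have hR : Tendsto (fun n : ℕ => stirlingRatio n / (stirlingRatio (n * y n) *
      stirlingRatio (n * (1 - y n)))) atTop (𝓝 1) := by
    have := tendsto_stirlingRatio_natCast.div ((tendsto_stirlingRatio_atTop.comp h₀).mul
      (tendsto_stirlingRatio_atTop.comp h₁)) (by norm_num)
    rwa [mul_one, div_one] at this
  refine hR.congr' ?_
  filter_upwards [h₀.eventually_gt_atTop 0, h₁.eventually_gt_atTop 0] with n hn₀ hn₁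
  have hn : n ≠ 0 := by rintro rfl; simp at hn₀
  have hy : y n ∈ Set.Ioo 0 1 :=
    ⟨pos_of_mul_pos_right hn₀ n.cast_nonneg, by linarith [pos_of_mul_pos_right hn₁ n.cast_nonneg]⟩
  have hsq : 0 < √(2 * π * (n * y n * (1 - y n))) := sqrt_pos.2 (by
    have := mul_pos hn₀ hn₁; nlinarith [pi_pos])
  rw [Pn_eq_stirlingRatio hn hy, div_mul_cancel₀ _ hsq.ne']

lemma tendsto_cbrt_two_pi_mul_atTop :
    Tendsto (fun n : ℕ => (2 * π * n) ^ ((1 : ℝ) / 3)) atTop atTop :=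
  (tendsto_rpow_atTop (by norm_num)).comp
    (tendsto_natCast_atTop_atTop.const_mul_atTop (by positivity))

theorem tendsto_Pn_div_cbrt {c : ℝ} (hc : 0 < c) :
    Tendsto (fun n : ℕ => Pn n (c / (2 * π * n) ^ ((1 : ℝ) / 3)) /
      (c / (2 * π * n) ^ ((1 : ℝ) / 3))) atTop (𝓝 (√(c ^ 3))⁻¹) := by
  set L : ℕ → ℝ := fun n => (2 * π * n) ^ ((1 : ℝ) / 3) with hL_def
  set y : ℕ → ℝ := fun n => c / L n with hy_def
  have hL : Tendsto L atTop atTop := tendsto_cbrt_two_pi_mul_atTop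
  have hL3 (n : ℕ) : L n ^ 3 = 2 * π * n := by
    rw [hL_def, ← rpow_natCast, ← rpow_mul (by positivity)]
    norm_num
  have hcube {n : ℕ} (hn : n ≠ 0) : 2 * π * n * y n ^ 3 = c ^ 3 := by
    have hL0 : L n ≠ 0 := by
      intro h
      simpa [h, hn, pi_ne_zero] using hL3 n
    rw [hy_def, div_pow, ← hL3]
    field_simp
  have hy : Tendsto y atTop (𝓝 0) := tendsto_const_nhds.div_atTop hL
  have h₀ : Tendsto (fun n => n * y n) atTop atTop := by
    refine (((tendsto_pow_atTop two_ne_zero).comp hL).const_mul_atTop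
      (by positivity : 0 < c / (2 * π))).congr' ?_
    filter_upwards [hL.eventually_gt_atTop 0] with n hLn
    simp only [Function.comp_apply, hy_def]
    field_simp
    exact hL3 n
  have h₁ : Tendsto (fun n => n * (1 - y n)) atTop atTop :=
    tendsto_natCast_atTop_atTop.atTop_mul_pos one_pos (by simpa using hy.const_sub 1)
  have hden : Tendsto (fun n => √(c ^ 3 * (1 - y n))) atTop (𝓝 √(c ^ 3)) := by
    simpa using ((hy.const_sub 1).const_mul (c ^ 3)).sqrt
  have := (tendsto_Pn_mul_sqrt h₀ h₁).div hden (by positivity)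
  rw [one_div] at this
  refine this.congr' ?_
  filter_upwards [eventually_ne_atTop 0, hL.eventually_gt_atTop 0,
    hy.eventually (gt_mem_nhds one_pos)] with n hn hLn hy1
  have hy0 : 0 < y n := div_pos hc hLn
  have hS : 0 < √(2 * π * (n * y n * (1 - y n))) := sqrt_pos.2 (by
    have : (0 : ℝ) < n := by positivity
    have := mul_pos (mul_pos this hy0) (sub_pos.2 hy1)
    positivity)
  have hsqrt : √(c ^ 3 * (1 - y n)) = y n * √(2 * π * (n * y n * (1 - y n))) := by
    rw [← hcube hn, show 2 * π * n * y n ^ 3 * (1 - y n) =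
      y n ^ 2 * (2 * π * (n * y n * (1 - y n))) by ring, sqrt_mul (sq_nonneg _), sqrt_sq hy0.le]
  change Pn n (y n) * √(2 * π * (n * y n * (1 - y n))) / √(c ^ 3 * (1 - y n)) =
    Pn n (y n) / y n
  rw [hsqrt, mul_div_mul_right _ _ hS.ne']

lemma eventually_lt_Pn_cbrt {c : ℝ} (hc0 : 0 < c) (hc1 : c < 1) :
    ∀ᶠ n : ℕ in atTop,
      c / (2 * π * n) ^ ((1 : ℝ) / 3) < Pn n (c / (2 * π * n) ^ ((1 : ℝ) / 3)) := by
  have hlim : 1 < (√(c ^ 3))⁻¹ := (one_lt_inv₀ (by positivity)).2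
    ((sqrt_lt' one_pos).2 (by simpa using pow_lt_one₀ hc0.le hc1 three_ne_zero))
  filter_upwards [(tendsto_Pn_div_cbrt hc0).eventually (lt_mem_nhds hlim),
    tendsto_cbrt_two_pi_mul_atTop.eventually_gt_atTop 0] with n h hL
  exact (one_lt_div (div_pos hc0 hL)).1 h

lemma eventually_Pn_cbrt_lt {c : ℝ} (hc : 1 < c) :
    ∀ᶠ n : ℕ in atTop,
      Pn n (c / (2 * π * n) ^ ((1 : ℝ) / 3)) < c / (2 * π * n) ^ ((1 : ℝ) / 3) := by
  have hc0 : 0 < c := zero_lt_one.trans hc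
  have hlim : (√(c ^ 3))⁻¹ < 1 := inv_lt_one_of_one_lt₀
    ((lt_sqrt zero_le_one).2 (by simpa using one_lt_pow₀ hc three_ne_zero))
  filter_upwards [(tendsto_Pn_div_cbrt hc0).eventually (gt_mem_nhds hlim),
    tendsto_cbrt_two_pi_mul_atTop.eventually_gt_atTop 0] with n h hL
  exact (div_lt_one (div_pos hc0 hL)).1 h

lemma continuousOn_Pn (n : ℕ) : ContinuousOn (Pn n) (Set.Ioo 0 1) := by
  intro x ⟨hx0, hx1⟩
  have hΓ {t : ℝ} (ht : 0 < t) : ContinuousAt Gamma t :=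
    (differentiableAt_Gamma fun m => ((neg_nonpos.2 m.cast_nonneg).trans_lt ht).ne').continuousAt
  have ha : 0 < (n : ℝ) * x + 1 := by positivity
  have hb : 0 < (n : ℝ) - n * x + 1 := by nlinarith [n.cast_nonneg (α := ℝ)]
  have hgbinom : ContinuousAt (fun x => gbinom n (n * x)) x :=
    continuousAt_const.div (((hΓ ha).comp (f := fun x : ℝ => n * x + 1) (by fun_prop)).mul
      ((hΓ hb).comp (f := fun x : ℝ => n - n * x + 1) (by fun_prop)))
      (mul_pos (Gamma_pos_of_pos ha) (Gamma_pos_of_pos hb)).ne'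
  exact ((hgbinom.mul (continuousAt_id.rpow (by fun_prop) (Or.inl hx0.ne'))).mul
    ((continuousAt_const.sub continuousAt_id).rpow (by fun_prop)
      (Or.inl (sub_ne_zero.2 hx1.ne')))).continuousWithinAt

section FixedPoint

variable {f : ℕ → ℝ → ℝ} {p L : ℕ → ℝ}

lemma eventually_fixedPoint_mul_mem_Icc (hL : Tendsto L atTop atTop)
    (hcont : ∀ n, ContinuousOn (f n) (Set.Ioo 0 1))
    (huniq : ∀ᶠ n in atTop, ∀ q ∈ Set.Ioo 0 1, f n q = q → q = p n) {a b : ℝ} (ha : 0 < a)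
    (hab : a ≤ b) (hfa : ∀ᶠ n in atTop, a / L n < f n (a / L n))
    (hfb : ∀ᶠ n in atTop, f n (b / L n) < b / L n) :
    ∀ᶠ n in atTop, p n * L n ∈ Set.Icc a b := by
  filter_upwards [huniq, hfa, hfb, hL.eventually_gt_atTop b] with n huniq hfa hfb hLb
  have hL0 : 0 < L n := by linarith
  have hsub : Set.Icc (a / L n) (b / L n) ⊆ Set.Ioo 0 1 := fun x hx =>
    ⟨(div_pos ha hL0).trans_le hx.1, hx.2.trans_lt ((div_lt_one hL0).2 hLb)⟩
  obtain ⟨q, hq, hfq⟩ := intermediate_value_Icc' (div_le_div_of_nonneg_right hab hL0.le)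
    (((hcont n).mono hsub).sub continuousOn_id) (show (0 : ℝ) ∈ Set.Icc _ _ from
      ⟨by simpa using hfb.le, by simpa using hfa.le⟩)
  obtain rfl := huniq q (hsub hq) (sub_eq_zero.1 hfq)
  exact ⟨(div_le_iff₀ hL0).1 hq.1, (le_div_iff₀ hL0).1 hq.2⟩

theorem tendsto_fixedPoint_mul (hL : Tendsto L atTop atTop)
    (hcont : ∀ n, ContinuousOn (f n) (Set.Ioo 0 1))
    (huniq : ∀ᶠ n in atTop, ∀ q ∈ Set.Ioo 0 1, f n q = q → q = p n)
    (hbelow : ∀ a ∈ Set.Ioo (0 : ℝ) 1, ∀ᶠ n in atTop, a / L n < f n (a / L n))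
    (habove : ∀ b, 1 < b → ∀ᶠ n in atTop, f n (b / L n) < b / L n) :
    Tendsto (fun n => p n * L n) atTop (𝓝 1) := by
  refine tendsto_order.2 ⟨fun a' ha' => ?_, fun b' hb' => ?_⟩
  · obtain ⟨a, ha, ha1⟩ := exists_between (max_lt ha' one_pos)
    have ha0 : 0 < a := (le_max_right _ _).trans_lt ha
    filter_upwards [eventually_fixedPoint_mul_mem_Icc hL hcont huniq ha0 (by linarith)
      (hbelow a ⟨ha0, ha1⟩) (habove 2 one_lt_two)] with n hn
    exact ((le_max_left _ _).trans_lt ha).trans_le hn.1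
  · obtain ⟨b, hb1, hb⟩ := exists_between hb'
    filter_upwards [eventually_fixedPoint_mul_mem_Icc hL hcont huniq one_half_pos (by linarith)
      (hbelow (1 / 2) ⟨one_half_pos, one_half_lt_one⟩) (habove b hb1)] with n hn
    exact hn.2.trans_lt hb

end FixedPoint

/-- If for every positive integer `n`, `p n ∈ (0,1)` is the unique fixed point of `P_n`
in `(0,1)`, then `p_n ~ (2πn)^{-1/3}` as `n → ∞`, i.e. `lim p_n·(2πn)^{1/3} = 1`. -/
theorem fixed_point_asymptotics (p : ℕ → ℝ)
    (hfix : ∀ n : ℕ, 0 < n →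
      p n ∈ Set.Ioo (0:ℝ) 1 ∧ Pn n (p n) = p n ∧
        ∀ q ∈ Set.Ioo (0:ℝ) 1, Pn n q = q → q = p n) :
    Tendsto (fun n : ℕ => p n * (2 * π * n) ^ ((1:ℝ) / 3)) atTop (𝓝 1) := by
  refine tendsto_fixedPoint_mul tendsto_cbrt_two_pi_mul_atTop continuousOn_Pn ?_
    (fun c hc => eventually_lt_Pn_cbrt hc.1 hc.2) (fun c hc => eventually_Pn_cbrt_lt hc)
  filter_upwards [eventually_gt_atTop 0] with n hn using (hfix n hn).2.2
end

section
/- For every positive integer n, the function P_n : (0,1) → ℝ given by P_n(p) = binom(n, np)·p^(np)·(1-p)^(n(1-p)) is log-convex on (0,1), i.e. the function p ↦ log P_n(p) is convex on (0,1). -/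
open Real Filter Topology

/-!
Write `h(x) = x log x - log Γ(x + 1)`. Then `log P_n(p) = log n! - n log n + h(np) + h(n(1 - p))`,
so it suffices that `h` is convex on `(0, ∞)`. By the trigamma series
`h''(x) = 1/x - ∑_{k ≥ 1} (x + k)⁻²`, which is nonnegative because
`(x + k)⁻² ≤ (x + k - 1)⁻¹ - (x + k)⁻¹` and the right-hand side telescopes to `1/x`.
This argument is run on the Gauss approximants `x log x - logGammaSeq (x + 1) m` of `h`, whose
second derivatives are the truncations of that series, and convexity passes to the limit `m → ∞`.
-/

open Set
open Finset (range sum_le_sum sum_range_sub' sum_neg_distrib)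
open scoped Nat

lemma sum_range_inv_add_one_add_sq_le_inv {x : ℝ} (hx : 0 < x) (n : ℕ) :
    ∑ j ∈ range n, ((x + 1 + j) ^ 2)⁻¹ ≤ x⁻¹ := by
  have term_le (j : ℕ) : ((x + 1 + j) ^ 2)⁻¹ ≤ (x + j)⁻¹ - (x + (j + 1 : ℕ))⁻¹ := by
    have hj : 0 < x + j := by positivity
    rw [Nat.cast_succ, inv_sub_inv hj.ne' (by positivity), show x + (j + 1) - (x + j) = 1 by ring,
      one_div]
    exact inv_anti₀ (by positivity) (by nlinarith)
  calc ∑ j ∈ range n, ((x + 1 + j) ^ 2)⁻¹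
      ≤ ∑ j ∈ range n, ((x + j)⁻¹ - (x + (j + 1 : ℕ))⁻¹) := sum_le_sum fun j _ => term_le j
    _ = x⁻¹ - (x + n)⁻¹ := by simpa using sum_range_sub' (fun j : ℕ => (x + j)⁻¹) n
    _ ≤ x⁻¹ := sub_le_self _ (by positivity)

lemma convexOn_mul_log_sub_logGammaSeq (m : ℕ) :
    ConvexOn ℝ (Ioi 0) fun x => x * log x - BohrMollerup.logGammaSeq (x + 1) m := by
  have hf' {x : ℝ} (hx : 0 < x) :
      HasDerivAt (fun x => x * log x - BohrMollerup.logGammaSeq (x + 1) m)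
        (log x + 1 - log m + ∑ j ∈ range (m + 1), (x + 1 + j)⁻¹) x := by
    have hlog : HasDerivAt (fun x => ∑ j ∈ range (m + 1), log (x + 1 + j))
        (∑ j ∈ range (m + 1), (x + 1 + j)⁻¹) x :=
      .fun_sum fun j _ => by
        simpa using (((hasDerivAt_id x).add_const 1).add_const (j : ℝ)).log (by positivity)
    show HasDerivAt (fun x => x * log x - ((x + 1) * log m + log m ! - ∑ j ∈ range (m + 1),
      log (x + 1 + j))) _ x
    exact ((hasDerivAt_mul_log hx.ne').fun_sub
      ((((hasDerivAt_id' x).add_const 1).mul_const (log m)).add_const (log m !) |>.fun_sub hlog)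
      ).congr_deriv (by ring)
  have hf'' {x : ℝ} (hx : 0 < x) : HasDerivAt
      (fun x => log x + 1 - log m + ∑ j ∈ range (m + 1), (x + 1 + j)⁻¹)
      (x⁻¹ - ∑ j ∈ range (m + 1), ((x + 1 + j) ^ 2)⁻¹) x := by
    have hinv : HasDerivAt (fun x : ℝ => ∑ j ∈ range (m + 1), (x + 1 + j)⁻¹)
        (∑ j ∈ range (m + 1), -((x + 1 + j) ^ 2)⁻¹) x :=
      .fun_sum fun j _ => by
        simpa [neg_div, one_div] using
          (((hasDerivAt_id x).add_const 1).add_const (j : ℝ)).fun_inv (by positivity)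
    exact ((((hasDerivAt_log hx.ne').add_const 1).sub_const (log m)).fun_add hinv).congr_deriv
      (by rw [sum_neg_distrib, sub_eq_add_neg])
  refine convexOn_of_hasDerivWithinAt2_nonneg (convex_Ioi 0)
    (f' := fun x => log x + 1 - log m + ∑ j ∈ range (m + 1), (x + 1 + j)⁻¹)
    (f'' := fun x => x⁻¹ - ∑ j ∈ range (m + 1), ((x + 1 + j) ^ 2)⁻¹)
    (fun x hx => (hf' hx).continuousAt.continuousWithinAt) ?_ ?_ ?_ <;> rw [interior_Ioi]
  · exact fun x hx => (hf' hx).hasDerivWithinAt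
  · exact fun x hx => (hf'' hx).hasDerivWithinAt
  · exact fun x hx => sub_nonneg.2 (sum_range_inv_add_one_add_sq_le_inv hx _)

lemma ConvexOn.of_tendsto {E ι : Type*} [AddCommGroup E] [Module ℝ E] {l : Filter ι} [l.NeBot]
    {s : Set E} {F : ι → E → ℝ} {f : E → ℝ} (hs : Convex ℝ s) (hF : ∀ i, ConvexOn ℝ s (F i))
    (hlim : ∀ x ∈ s, Tendsto (fun i => F i x) l (𝓝 (f x))) : ConvexOn ℝ s f :=
  ⟨hs, fun x hx y hy a b ha hb hab =>
    le_of_tendsto_of_tendsto' (hlim _ (hs hx hy ha hb hab))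
      (((hlim x hx).const_smul a).add ((hlim y hy).const_smul b))
      fun i => (hF i).2 hx hy ha hb hab⟩

noncomputable def logSelfPowDivGamma (x : ℝ) : ℝ := x * log x - log (Gamma (x + 1))

lemma convexOn_logSelfPowDivGamma : ConvexOn ℝ (Ioi 0) logSelfPowDivGamma :=
  .of_tendsto (l := atTop) (convex_Ioi 0) convexOn_mul_log_sub_logGammaSeq fun _ hx =>
    tendsto_const_nhds.sub (BohrMollerup.tendsto_log_gamma (add_pos hx one_pos))

lemma ConvexOn.comp_mul_add {s : Set ℝ} {f : ℝ → ℝ} (hf : ConvexOn ℝ s f) (a b : ℝ) :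
    ConvexOn ℝ ((fun x => a * x + b) ⁻¹' s) fun x => f (a * x + b) :=
  hf.comp_affineMap (a • AffineMap.id ℝ ℝ + AffineMap.const ℝ ℝ b)

lemma log_Pn_eq {n : ℕ} (hn : 0 < n) {p : ℝ} (hp : p ∈ Ioo 0 1) :
    log (Pn n p) = log n ! - n * log n
      + logSelfPowDivGamma (n * p) + logSelfPowDivGamma (n * (1 - p)) := by
  obtain ⟨hp0, hp1⟩ := hp
  have hq0 : 0 < 1 - p := sub_pos.2 hp1
  have hn0 : (0 : ℝ) < n := by exact_mod_cast hn
  have hG₁ : 0 < Gamma (n * p + 1) := Gamma_pos_of_pos (by positivity)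
  have hG₂ : 0 < Gamma (n * (1 - p) + 1) := Gamma_pos_of_pos (by positivity)
  have hsub : (n : ℝ) - n * p + 1 = n * (1 - p) + 1 := by ring
  rw [Pn, gbinom, hsub, log_mul (by positivity) (by positivity),
    log_mul (by positivity) (by positivity), log_div (by positivity) (by positivity),
    log_mul hG₁.ne' hG₂.ne', log_rpow hp0, log_rpow hq0, logSelfPowDivGamma, logSelfPowDivGamma,
    log_mul hn0.ne' hp0.ne', log_mul hn0.ne' hq0.ne']
  ring

/-- For every positive integer `n`, the function `P_n` is log-convex on `(0,1)`,
i.e. `p ↦ log P_n(p)` is convex on `(0,1)`. -/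
theorem Pn_logConvex (n : ℕ) (hn : 0 < n) :
    ConvexOn ℝ (Set.Ioo (0:ℝ) 1) (fun p => Real.log (Pn n p)) := by
  have hn0 : (0 : ℝ) < n := by exact_mod_cast hn
  have h₁ : ConvexOn ℝ (Ioo 0 1) fun p => logSelfPowDivGamma (n * p + 0) :=
    (convexOn_logSelfPowDivGamma.comp_mul_add n 0).subset
      (fun p hp => show 0 < n * p + 0 by simpa using mul_pos hn0 hp.1) (convex_Ioo 0 1)
  have h₂ : ConvexOn ℝ (Ioo 0 1) fun p => logSelfPowDivGamma (-n * p + n) :=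
    (convexOn_logSelfPowDivGamma.comp_mul_add (-n) n).subset
      (fun p hp => show 0 < -n * p + n by nlinarith [hp.2]) (convex_Ioo 0 1)
  refine ((convexOn_const (log n ! - n * log n) (convex_Ioo 0 1)).add h₁ |>.add h₂).congr
    fun p hp => ?_
  rw [Pi.add_apply, Pi.add_apply, log_Pn_eq hn hp, add_zero,
    show -(n : ℝ) * p + n = n * (1 - p) by ring]
end

section
/- For every positive integer n, the function P_n : (0,1) → ℝ given by P_n(p) = binom(n, np)·p^(np)·(1-p)^(n(1-p)) is convex on (0,1). -/
/-! Taking logarithms, `P_n(p) = exp (u(np) + u(n(1-p)) + log (n!/nⁿ))` with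
`u(x) = x log x - log Γ(x+1)`, and the exponential of a convex function is convex, so it suffices
that `u` is convex on `(0, ∞)`. By the Gauss product formula `u` is the pointwise limit of
`x log x - logGammaSeq (x+1) m`; telescoping `x log x` along `x, x+1, …, x+m+1` rewrites this as a
sum of translates of `y log y - y log (y+1)` (second derivative `1/(y(y+1)²)`), a translate of
`y log y`, and an affine function, all of which are convex. -/

open Real Filter Topology

open Set Real.BohrMollerup
open scoped Nat

section

variable {E : Type*} [AddCommMonoid E] [Module ℝ E] {s : Set E}

theorem convexOn_of_tendsto {ι : Type*} {l : Filter ι} [l.NeBot] {f : ι → E → ℝ} {g : E → ℝ}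
    (hf : ∀ᶠ i in l, ConvexOn ℝ s (f i)) (hg : ∀ x ∈ s, Tendsto (fun i => f i x) l (𝓝 (g x))) :
    ConvexOn ℝ s g := by
  obtain ⟨_, hs, -⟩ := hf.exists
  refine ⟨hs, fun x hx y hy a b ha hb hab => ?_⟩
  refine le_of_tendsto_of_tendsto (hg _ (hs hx hy ha hb hab))
    (((hg x hx).const_smul a).add ((hg y hy).const_smul b)) ?_
  filter_upwards [hf] with i hi
  exact hi.2 hx hy ha hb hab

theorem ConvexOn.exp {f : E → ℝ} (hf : ConvexOn ℝ s f) : ConvexOn ℝ s fun x => exp (f x) :=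
  ⟨hf.1, fun x hx y hy a b ha hb hab =>
    calc Real.exp (f (a • x + b • y)) ≤ Real.exp (a • f x + b • f y) :=
          exp_le_exp.2 (hf.2 hx hy ha hb hab)
      _ ≤ a • Real.exp (f x) + b • Real.exp (f y) := convexOn_exp.2 trivial trivial ha hb hab⟩

theorem convexOn_finsetSum {ι : Type*} {t : Finset ι} {f : ι → E → ℝ} (hs : Convex ℝ s)
    (hf : ∀ i ∈ t, ConvexOn ℝ s (f i)) : ConvexOn ℝ s fun x => ∑ i ∈ t, f i x := by
  simpa only [← Finset.sum_apply] using
    Finset.sum_induction f (ConvexOn ℝ s) (fun _ _ => ConvexOn.add) (convexOn_const 0 hs) hf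

end

theorem ConvexOn.comp_add_nonneg {f : ℝ → ℝ} (hf : ConvexOn ℝ (Ioi 0) f) {c : ℝ} (hc : 0 ≤ c) :
    ConvexOn ℝ (Ioi 0) fun x => f (x + c) :=
  (hf.translate_left c).subset (fun x (hx : 0 < x) => show 0 < c + x by linarith) (convex_Ioi 0)

theorem convexOn_mul_log_sub_mul_log_add_one :
    ConvexOn ℝ (Ioi 0) fun y : ℝ => y * log y - y * log (y + 1) := by
  have hshift {y : ℝ} (hy : 0 < y) : HasDerivAt (fun y : ℝ => y + 1) 1 y ∧ y + 1 ≠ 0 :=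
    ⟨(hasDerivAt_id' y).add_const 1, by positivity⟩
  have hf' {y : ℝ} (hy : 0 < y) : HasDerivAt (fun y => y * log y - y * log (y + 1))
      (log y - log (y + 1) + (y + 1)⁻¹) y := by
    obtain ⟨h1, hy1⟩ := hshift hy
    have := ((hasDerivAt_id' y).mul (hasDerivAt_log hy.ne')).sub
      ((hasDerivAt_id' y).mul (h1.log hy1))
    exact this.congr_deriv (by field_simp; ring)
  have hf'' {y : ℝ} (hy : 0 < y) : HasDerivAt (fun y => log y - log (y + 1) + (y + 1)⁻¹)
      (y * (y + 1) ^ 2)⁻¹ y := by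
    obtain ⟨h1, hy1⟩ := hshift hy
    have := ((hasDerivAt_log hy.ne').sub (h1.log hy1)).add (h1.inv hy1)
    exact this.congr_deriv (by field_simp; ring)
  exact convexOn_of_hasDerivWithinAt2_nonneg (convex_Ioi 0)
    (fun y hy => (hf' hy).continuousAt.continuousWithinAt)
    (fun y hy => (hf' (interior_subset hy)).hasDerivWithinAt)
    (fun y hy => (hf'' (interior_subset hy)).hasDerivWithinAt)
    (fun y hy => have : 0 < y := interior_subset hy; by positivity)

theorem mul_log_sub_logGammaSeq_add_one (x : ℝ) (n : ℕ) :
    x * log x - logGammaSeq (x + 1) n =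
      ∑ m ∈ Finset.range (n + 1), ((x + m) * log (x + m) - (x + m) * log (x + m + 1))
        + ((x + (n + 1)) * log (x + (n + 1)) - (log n * (x + 1) + log n !)) := by
  have htel := Finset.sum_range_sub' (fun m : ℕ => (x + m) * log (x + m)) (n + 1)
  have hsplit (m : ℕ) : (x + m) * log (x + m) - (x + m) * log (x + m + 1) =
      ((x + m) * log (x + m) - (x + (m + 1 : ℕ)) * log (x + (m + 1 : ℕ))) + log (x + 1 + m) := by
    push_cast; ring_nf
  rw [Finset.sum_congr rfl fun m _ => hsplit m, Finset.sum_add_distrib, htel, logGammaSeq]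
  push_cast [add_zero]
  ring

theorem convexOn_mul_log_sub_logGammaSeq_add_one (n : ℕ) :
    ConvexOn ℝ (Ioi 0) fun x => x * log x - logGammaSeq (x + 1) n := by
  have hsum := convexOn_finsetSum (convex_Ioi 0) fun (m : ℕ) (_ : m ∈ Finset.range (n + 1)) =>
    convexOn_mul_log_sub_mul_log_add_one.comp_add_nonneg m.cast_nonneg
  have hlast := (convexOn_mul_log.subset Ioi_subset_Ici_self (convex_Ioi 0)).comp_add_nonneg
    (by positivity : (0 : ℝ) ≤ n + 1)
  have haffine : ConcaveOn ℝ (Ioi 0) fun x : ℝ => log n * (x + 1) + log n ! :=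
    (((concaveOn_id (convex_Ioi 0)).add_const 1).smul (log_natCast_nonneg n)).add_const _
  exact (hsum.add (hlast.sub haffine)).congr fun x _ => (mul_log_sub_logGammaSeq_add_one x n).symm

theorem convexOn_mul_log_sub_log_Gamma_add_one :
    ConvexOn ℝ (Ioi 0) fun x => x * log x - log (Gamma (x + 1)) :=
  convexOn_of_tendsto (l := atTop) (.of_forall convexOn_mul_log_sub_logGammaSeq_add_one)
    fun x (hx : 0 < x) => tendsto_const_nhds.sub (tendsto_log_gamma (by linarith))

theorem Pn_eq_exp {n : ℕ} (hn : 0 < n) {p : ℝ} (hp : p ∈ Ioo 0 1) :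
    Pn n p = exp ((n * p * log (n * p) - log (Gamma (n * p + 1)))
      + (n * (1 - p) * log (n * (1 - p)) - log (Gamma (n * (1 - p) + 1)))
      + (log n ! - n * log n)) := by
  obtain ⟨hp₀, hp₁⟩ := hp
  have hq₀ : 0 < 1 - p := sub_pos.2 hp₁
  have hn₀ : (0 : ℝ) < n := Nat.cast_pos.2 hn
  have hΓ₁ : 0 < Gamma (n * p + 1) := Gamma_pos_of_pos (by positivity)
  have hΓ₂ : 0 < Gamma (n * (1 - p) + 1) := Gamma_pos_of_pos (by positivity)
  have hPn : Pn n p = n ! / (Gamma (n * p + 1) * Gamma (n * (1 - p) + 1))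
      * p ^ (n * p) * (1 - p) ^ (n * (1 - p)) := by
    rw [Pn, gbinom, show (n : ℝ) - n * p + 1 = n * (1 - p) + 1 by ring]
  rw [← exp_log (show 0 < Pn n p by rw [hPn]; positivity), hPn,
    log_mul (by positivity) (by positivity), log_mul (by positivity) (by positivity),
    log_div (by positivity) (by positivity), log_mul hΓ₁.ne' hΓ₂.ne',
    log_rpow hp₀, log_rpow hq₀, log_mul hn₀.ne' hp₀.ne', log_mul hn₀.ne' hq₀.ne']
  ring_nf

/-- For every positive integer `n`, the function `P_n` is convex on `(0,1)`. -/
theorem Pn_convex (n : ℕ) (hn : 0 < n) :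
    ConvexOn ℝ (Set.Ioo (0:ℝ) 1) (Pn n) := by
  have hu := convexOn_mul_log_sub_log_Gamma_add_one
  have hn₀ : (0 : ℝ) < n := Nat.cast_pos.2 hn
  have h₁ := (hu.comp_affineMap (AffineMap.lineMap (0 : ℝ) (n : ℝ))).subset
    (fun p hp => by simpa [AffineMap.lineMap_apply_ring] using mul_pos hp.1 hn₀) (convex_Ioo 0 1)
  have h₂ := (hu.comp_affineMap (AffineMap.lineMap (n : ℝ) (0 : ℝ))).subset
    (fun p hp => by simpa [AffineMap.lineMap_apply_ring] using mul_pos (sub_pos.2 hp.2) hn₀)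
    (convex_Ioo 0 1)
  refine (((h₁.add h₂).add_const (log n ! - n * log n)).exp).congr fun p hp => ?_
  rw [Pn_eq_exp hn hp]
  simp only [Pi.add_apply, Function.comp_apply, AffineMap.lineMap_apply_ring]
  ring_nf
end

section
/- Let f : [0,1] → [0,1] be a differentiable convex function with f(0) = f(1) = 1 and lim_{x→1⁻} f'(x) > 1. Then f has exactly one fixed point x* in the open interval (0,1). -/
open Real Filter Topology

/-- Fixed-point existence and uniqueness: if `f : [0,1] → [0,1]` is differentiable and
convex on `[0,1]`, with `f(0) = f(1) = 1` and `lim_{x→1⁻} f'(x) = L > 1`, then `f` has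
exactly one fixed point in the open interval `(0,1)`. -/
theorem unique_fixed_point (f : ℝ → ℝ)
    (hmaps : Set.MapsTo f (Set.Icc 0 1) (Set.Icc 0 1))
    (hdiff : DifferentiableOn ℝ f (Set.Icc 0 1))
    (hconv : ConvexOn ℝ (Set.Icc 0 1) f)
    (h0 : f 0 = 1) (h1 : f 1 = 1)
    (L : ℝ) (hL : 1 < L)
    (hlim : Tendsto (derivWithin f (Set.Icc 0 1)) (𝓝[<] (1:ℝ)) (𝓝 L)) :
    ∃! x, x ∈ Set.Ioo (0:ℝ) 1 ∧ f x = x := by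
  -- Step 1: find a point x₀ ∈ (0,1) with derivWithin f > 1 there
  have hev : ∀ᶠ x in 𝓝[<] (1:ℝ), 1 < derivWithin f (Set.Icc 0 1) x :=
    hlim.eventually (eventually_gt_nhds hL)
  have hmem : Set.Ioo (0:ℝ) 1 ∈ 𝓝[<] (1:ℝ) :=
    Ioo_mem_nhdsLT_of_mem (by constructor <;> norm_num)
  obtain ⟨x₀, hx₀d, hx₀⟩ := (hev.and (eventually_of_mem hmem (fun x hx => hx))).exists
  have hx₀1 : x₀ ∈ Set.Icc (0:ℝ) 1 := Set.Ioo_subset_Icc_self hx₀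
  -- derivative ≤ slope from x₀ to 1, hence f x₀ < x₀
  have hslope : derivWithin f (Set.Icc 0 1) x₀ ≤ slope f x₀ 1 :=
    hconv.derivWithin_le_slope hx₀1 (by norm_num) hx₀.2 (hdiff x₀ hx₀1)
  have hfx₀ : f x₀ < x₀ := by
    rw [slope_def_field, h1] at hslope
    have h1x : 0 < 1 - x₀ := by linarith [hx₀.2]
    have : 1 - x₀ < 1 - f x₀ := by
      have := hslope.trans_lt' hx₀d
      calc 1 - x₀ = 1 * (1 - x₀) := (one_mul _).symm
        _ < (1 - f x₀) / (1 - x₀) * (1 - x₀) := by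
            apply mul_lt_mul_of_pos_right _ h1x
            exact lt_of_lt_of_le hx₀d hslope
        _ = 1 - f x₀ := div_mul_cancel₀ _ h1x.ne'
    linarith
  -- Step 2: IVT gives a fixed point in (0, x₀)
  have hcont : ContinuousOn (fun x => f x - x) (Set.Icc 0 x₀) :=
    ((hdiff.continuousOn.mono (Set.Icc_subset_Icc le_rfl hx₀1.2)).sub continuousOn_id)
  have hiv := intermediate_value_Ioo' (le_of_lt hx₀.1) hcont
  have h0' : (0:ℝ) ∈ Set.Ioo ((fun x => f x - x) x₀) ((fun x => f x - x) 0) := by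
    constructor
    · simpa using hfx₀
    · simp [h0]
  obtain ⟨c, hc, hfc⟩ := hiv h0'
  have hc1 : c ∈ Set.Ioo (0:ℝ) 1 := ⟨hc.1, hc.2.trans hx₀.2⟩
  have hfcfix : f c = c := by
    have : f c - c = 0 := hfc
    linarith
  refine ⟨c, ⟨hc1, hfcfix⟩, ?_⟩
  -- Step 3: uniqueness
  rintro y ⟨hy, hfy⟩
  by_contra hne
  -- wlog: two distinct fixed points a < b
  obtain ⟨a, b, ha, hb, hab, hfa, hfb⟩ :
      ∃ a b, a ∈ Set.Ioo (0:ℝ) 1 ∧ b ∈ Set.Ioo (0:ℝ) 1 ∧ a < b ∧ f a = a ∧ f b = b := by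
    rcases lt_or_gt_of_ne hne with h | h
    · exact ⟨y, c, hy, hc1, h, hfy, hfcfix⟩
    · exact ⟨c, y, hc1, hy, h, hfcfix, hfy⟩
  -- f = id on (b, 1)
  have hid : ∀ x ∈ Set.Ioo b 1, f x = x := by
    intro x hx
    have haI : a ∈ Set.Icc (0:ℝ) 1 := Set.Ioo_subset_Icc_self ha
    have hbI : b ∈ Set.Icc (0:ℝ) 1 := Set.Ioo_subset_Icc_self hb
    have hxI : x ∈ Set.Icc (0:ℝ) 1 := ⟨le_of_lt (lt_trans hb.1 hx.1), hx.2.le⟩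
    have h1I : (1:ℝ) ∈ Set.Icc (0:ℝ) 1 := by norm_num
    -- slope f b x ≤ slope f b 1 = 1
    have hle : (f x - f b) / (x - b) ≤ (f 1 - f b) / (1 - b) :=
      hconv.secant_mono hbI hxI h1I (ne_of_gt hx.1) (ne_of_gt hb.2) hx.2.le
    rw [h1, hfb] at hle
    have hxb : 0 < x - b := by linarith [hx.1]
    have h1b : 0 < 1 - b := by linarith [hb.2]
    have hup : f x ≤ x := by
      rw [div_self h1b.ne', div_le_one hxb] at hle
      linarith
    -- slope f a b ≤ slope f a x, so x ≤ f x
    have hge : (f b - f a) / (b - a) ≤ (f x - f a) / (x - a) := by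
      apply hconv.secant_mono haI hbI hxI (ne_of_gt hab) (ne_of_gt (hab.trans hx.1))
        (le_of_lt hx.1)
    rw [hfa, hfb] at hge
    have hba : 0 < b - a := by linarith
    have hxa : 0 < x - a := by linarith [hx.1]
    rw [div_self hba.ne', le_div_iff₀ hxa, one_mul] at hge
    have hlow : x ≤ f x := by linarith
    linarith
  -- hence derivWithin f (Icc 0 1) → 1 at 1⁻, contradicting L > 1
  have hobI : Set.Ioo b 1 ∈ 𝓝[<] (1:ℝ) := Ioo_mem_nhdsLT_of_mem ⟨hb.2, le_rfl⟩
  have hderiv1 : ∀ x ∈ Set.Ioo b 1, derivWithin f (Set.Icc 0 1) x = 1 := by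
    intro x hx
    have hnhds : Set.Icc (0:ℝ) 1 ∈ 𝓝 x :=
      Icc_mem_nhds (lt_trans hb.1 hx.1) hx.2
    rw [derivWithin_of_mem_nhds hnhds]
    have heq : f =ᶠ[𝓝 x] id := by
      filter_upwards [isOpen_Ioo.mem_nhds hx] with t ht
      exact hid t ht
    rw [heq.deriv_eq]
    exact deriv_id x
  have htend1 : Tendsto (derivWithin f (Set.Icc 0 1)) (𝓝[<] (1:ℝ)) (𝓝 1) := by
    apply Tendsto.congr' _ tendsto_const_nhds
    filter_upwards [hobI] with t ht
    exact (hderiv1 t ht).symm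
  have : L = 1 := tendsto_nhds_unique hlim htend1
  linarith
end

section
/- For every positive integer n and every nonnegative integer i, the inequality (1 + 2/n)^{2i+1} > 1 + (2i+1)/(n+2) + (2i+1)(2i+2)/(3(n+2)²) holds. -/
/-- Quadratic Bernoulli: `(1+x)^m ≥ 1 + m x + m(m-1)/2 x²` for `x ≥ 0`. -/
lemma quad_bernoulli (x : ℝ) (hx : 0 ≤ x) (m : ℕ) :
    1 + (m : ℝ) * x + ((m : ℝ) * ((m : ℝ) - 1) / 2) * x ^ 2 ≤ (1 + x) ^ m := by
  induction m with
  | zero => norm_num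
  | succ k ih =>
    have hk : (0:ℝ) ≤ (k:ℝ) := by positivity
    push_cast
    have : (1 + x) ^ (k + 1) = (1 + x) ^ k * (1 + x) := by ring
    rw [this]
    have hkk : (0:ℝ) ≤ (k:ℝ) * ((k:ℝ) - 1) := by
      rcases Nat.eq_zero_or_pos k with h | h
      · simp [h]
      · have : (1:ℝ) ≤ (k:ℝ) := by exact_mod_cast h
        nlinarith
    nlinarith [mul_le_mul_of_nonneg_right ih (by linarith : (0:ℝ) ≤ 1 + x),
      mul_nonneg (mul_nonneg hkk hx) (mul_nonneg hx hx), mul_nonneg hx hx]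

/-- For every positive integer `n` and every nonnegative integer `i`,
`(1 + 2/n)^{2i+1} > 1 + (2i+1)/(n+2) + (2i+1)(2i+2)/(3(n+2)²)`. -/
theorem binomial_expansion_inequality (n : ℕ) (hn : 0 < n) (i : ℕ) :
    1 + (2 * (i : ℝ) + 1) / ((n : ℝ) + 2) +
        (2 * (i : ℝ) + 1) * (2 * (i : ℝ) + 2) / (3 * ((n : ℝ) + 2) ^ 2)
      < (1 + 2 / (n : ℝ)) ^ (2 * i + 1) := by
  have hN : (1:ℝ) ≤ (n:ℝ) := by exact_mod_cast hn
  have hN0 : (0:ℝ) < (n:ℝ) := by linarith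
  have hN2 : (0:ℝ) < (n:ℝ) + 2 := by linarith
  have hi : (0:ℝ) ≤ (i:ℝ) := by positivity
  have key := quad_bernoulli (2 / (n:ℝ)) (by positivity) (2 * i + 1)
  push_cast at key
  refine lt_of_lt_of_le ?_ key
  rw [← sub_pos]
  have hrw : 1 + (2 * (i:ℝ) + 1) * (2 / (n:ℝ)) + (2 * (i:ℝ) + 1) * (2 * (i:ℝ) + 1 - 1) / 2 * (2 / (n:ℝ)) ^ 2 -
      (1 + (2 * (i:ℝ) + 1) / ((n:ℝ) + 2) +
        (2 * (i:ℝ) + 1) * (2 * (i:ℝ) + 2) / (3 * ((n:ℝ) + 2) ^ 2)) =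
      ((2 * (i:ℝ) + 1) * (3 * (n:ℝ) * ((n:ℝ)+2) * ((n:ℝ)+4) + 12 * (i:ℝ) * ((n:ℝ)+2)^2
        - (2 * (i:ℝ) + 2) * (n:ℝ)^2)) / (3 * (n:ℝ)^2 * ((n:ℝ)+2)^2) := by
    field_simp
    ring
  rw [hrw]
  apply div_pos _ (by positivity)
  apply mul_pos (by positivity)
  nlinarith [mul_nonneg hi (mul_nonneg hN0.le hN0.le), mul_nonneg hi hN0.le,
    mul_nonneg (mul_nonneg hN0.le hN0.le) hN0.le, sq_nonneg ((n:ℝ)),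
    mul_le_mul_of_nonneg_left hN (mul_nonneg hN0.le hN0.le)]
end

section
/- For every positive integer n, the derivative of P_n satisfies lim_{p→0⁺} P_n'(p) = -∞ and lim_{p→1⁻} P_n'(p) = +∞. -/
open Real Filter Topology

open Set

theorem ContDiffAt.continuousAt_deriv {𝕜 E : Type*} [NontriviallyNormedField 𝕜]
    [NormedAddCommGroup E] [NormedSpace 𝕜 E] {f : 𝕜 → E} {x : 𝕜} {k : WithTop ℕ∞}
    (hf : ContDiffAt 𝕜 k f x) (hk : 1 ≤ k) : ContinuousAt (deriv f) x := by
  obtain ⟨u, hu, hxu, hfu⟩ := hf.contDiffOn' hk (by simp)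
  rw [insert_eq_of_mem (mem_univ x), univ_inter] at hfu
  exact (hfu.continuousOn_deriv_of_isOpen hu le_rfl).continuousAt (hu.mem_nhds hxu)

theorem Real.contDiff_inv_Gamma {k : WithTop ℕ∞} : ContDiff ℝ k fun x : ℝ => (Gamma x)⁻¹ := by
  have h := (Complex.differentiable_one_div_Gamma.contDiff (n := k)).real_of_complex
  simp only [Complex.Gamma_ofReal, ← Complex.ofReal_inv, Complex.ofReal_re] at h
  exact h

theorem Real.hasDerivAt_rpow_const_mul_self {c x : ℝ} (hx : 0 < x) :
    HasDerivAt (fun p : ℝ => p ^ (c * p)) (c * x ^ (c * x) * (log x + 1)) x := by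
  convert (hasDerivAt_id' x).rpow ((hasDerivAt_id' x).const_mul c) hx using 1
  rw [rpow_sub_one hx.ne']
  field_simp
  ring

theorem Real.tendsto_rpow_const_mul_self_nhdsGT_zero (c : ℝ) :
    Tendsto (fun p : ℝ => p ^ (c * p)) (𝓝[>] 0) (𝓝 1) := by
  have hlog : Tendsto (fun p : ℝ => c * (p * log p)) (𝓝[>] 0) (𝓝 0) := by
    simpa using ((continuous_mul_log.tendsto 0).mono_left nhdsWithin_le_nhds).const_mul c
  rw [← exp_zero]
  refine ((continuous_exp.tendsto 0).comp hlog).congr' ?_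
  filter_upwards [self_mem_nhdsWithin] with p (hp : 0 < p)
  rw [Function.comp_apply, rpow_def_of_pos hp]
  ring_nf

theorem tendsto_deriv_mul_rpow_const_mul_self_nhdsGT_zero {F : ℝ → ℝ} {c : ℝ}
    (hF : ContDiffAt ℝ 1 F 0) (hF0 : 0 < F 0) (hc : 0 < c) :
    Tendsto (deriv fun p => F p * p ^ (c * p)) (𝓝[>] 0) atBot := by
  have hpow := tendsto_rpow_const_mul_self_nhdsGT_zero c
  have hFlim : Tendsto F (𝓝[>] 0) (𝓝 (F 0)) :=
    hF.continuousAt.tendsto.mono_left nhdsWithin_le_nhds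
  have hF'lim : Tendsto (deriv F) (𝓝[>] 0) (𝓝 (deriv F 0)) :=
    (hF.continuousAt_deriv le_rfl).tendsto.mono_left nhdsWithin_le_nhds
  have hbounded : Tendsto (fun p => p ^ (c * p) * (deriv F p + c * F p)) (𝓝[>] 0)
      (𝓝 (1 * (deriv F 0 + c * F 0))) := hpow.mul (hF'lim.add (hFlim.const_mul c))
  have hlog : Tendsto (fun p => c * F p * p ^ (c * p) * log p) (𝓝[>] 0) atBot := by
    refine Tendsto.pos_mul_atBot (C := c * F 0 * 1) (by positivity) ?_ tendsto_log_nhdsGT_zero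
    exact (hFlim.const_mul c).mul hpow
  -- `(F p · p ^ (c p))' = p ^ (c p) (F' p + c F p) + c F p · p ^ (c p) · log p`
  refine (hbounded.add_atBot hlog).congr' ?_
  have hdiff : ∀ᶠ p in 𝓝[>] 0, DifferentiableAt ℝ F p :=
    nhdsWithin_le_nhds ((hF.eventually (by simp)).mono fun p hp => hp.differentiableAt one_ne_zero)
  filter_upwards [hdiff, self_mem_nhdsWithin] with p hFp hp
  rw [((hFp.hasDerivAt).fun_mul (hasDerivAt_rpow_const_mul_self hp)).deriv]
  ring

theorem gbinom_eq_factorial_mul_inv_Gamma (n : ℕ) : gbinom n = fun a =>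
    (n.factorial : ℝ) * ((Gamma (a + 1))⁻¹ * (Gamma ((n : ℝ) - a + 1))⁻¹) := by
  funext a
  rw [gbinom, div_eq_mul_inv, mul_inv]

theorem contDiff_gbinom (n : ℕ) {k : WithTop ℕ∞} : ContDiff ℝ k (gbinom n) := by
  rw [gbinom_eq_factorial_mul_inv_Gamma]
  exact contDiff_const.mul ((contDiff_inv_Gamma.comp (contDiff_id.add contDiff_const)).mul
    (contDiff_inv_Gamma.comp ((contDiff_const.sub contDiff_id).add contDiff_const)))

@[simp]
theorem gbinom_zero (n : ℕ) : gbinom n 0 = 1 := by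
  have h : (n.factorial : ℝ) ≠ 0 := by positivity
  simp [gbinom, Gamma_nat_eq_factorial, h]

theorem gbinom_sub (n : ℕ) (a : ℝ) : gbinom n (n - a) = gbinom n a := by
  rw [gbinom, gbinom, sub_sub_cancel, mul_comm]

theorem Pn_one_sub (n : ℕ) (p : ℝ) : Pn n (1 - p) = Pn n p := by
  rw [Pn, Pn, mul_one_sub, gbinom_sub, sub_sub_cancel, ← mul_one_sub, mul_right_comm]

theorem Pn_eq_mul_rpow (n : ℕ) : Pn n =
    fun p => gbinom n (n * p) * (1 - p) ^ ((n : ℝ) * (1 - p)) * p ^ ((n : ℝ) * p) := by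
  funext p
  rw [Pn, mul_right_comm]

theorem contDiffAt_gbinom_mul_one_sub_rpow (n : ℕ) : ContDiffAt ℝ 1
    (fun p : ℝ => gbinom n (n * p) * (1 - p) ^ ((n : ℝ) * (1 - p))) 0 := by
  refine ((contDiff_gbinom n).comp (contDiff_const.mul contDiff_id)).contDiffAt.mul ?_
  refine (contDiffAt_const.sub contDiffAt_id).rpow
    (contDiffAt_const.mul (contDiffAt_const.sub contDiffAt_id)) ?_
  norm_num

theorem tendsto_one_sub_nhdsLT_one : Tendsto (fun p : ℝ => 1 - p) (𝓝[<] 1) (𝓝[>] 0) := by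
  refine tendsto_nhdsWithin_of_tendsto_nhds_of_eventually_within _ ?_ ?_
  · simpa using ((continuous_sub_left (1 : ℝ)).tendsto 1).mono_left nhdsWithin_le_nhds
  · filter_upwards [self_mem_nhdsWithin] with p (hp : p < 1)
    exact sub_pos.mpr hp

/-- For every positive integer `n`, `lim_{p→0⁺} P_n'(p) = -∞` and `lim_{p→1⁻} P_n'(p) = +∞`. -/
theorem Pn_deriv_boundary_limits (n : ℕ) (hn : 0 < n) :
    Tendsto (deriv (Pn n)) (𝓝[>] (0:ℝ)) atBot ∧
    Tendsto (deriv (Pn n)) (𝓝[<] (1:ℝ)) atTop := by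
  have h0 : Tendsto (deriv (Pn n)) (𝓝[>] 0) atBot := by
    rw [Pn_eq_mul_rpow]
    exact tendsto_deriv_mul_rpow_const_mul_self_nhdsGT_zero
      (contDiffAt_gbinom_mul_one_sub_rpow n) (by simp) (by exact_mod_cast hn)
  have h_deriv_symm : deriv (Pn n) = fun p => -deriv (Pn n) (1 - p) := by
    funext p
    rw [← deriv_comp_const_sub]
    simp only [Pn_one_sub]
  refine ⟨h0, ?_⟩
  rw [h_deriv_symm]
  exact tendsto_neg_atBot_atTop.comp (h0.comp tendsto_one_sub_nhdsLT_one)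
end

section
/- For every positive integer n, the function α ↦ binom(n,α) = n!/(Γ(α+1)·Γ(n-α+1)) is strictly increasing on the interval (0, n/2]; equivalently, the function x ↦ binom(n, 2^{-n}·n·x) is increasing for 0 < x < 2^{n-1}. -/
open Real Filter Topology

open Real Filter Topology

lemma strictConvexOn_log_Gamma' : StrictConvexOn ℝ (Set.Ioi 0) (fun u : ℝ => Real.log (Real.Gamma u)) := by
  refine ⟨convex_Ioi 0, fun x hx y hy hxy t s ht hs hts => ?_⟩
  simp only [smul_eq_mul] at *
  have hx0 : (0:ℝ) < x := hx
  have hy0 : (0:ℝ) < y := hy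
  have hz0 : (0:ℝ) < t*x + s*y := by positivity
  have h1 : Real.Gamma (t*x + s*y + 1) = (t*x+s*y) * Real.Gamma (t*x+s*y) :=
    Real.Gamma_add_one hz0.ne'
  have hconv := Real.convexOn_log_Gamma.2 (Set.mem_Ioi.mpr (by linarith : (0:ℝ) < x+1))
    (Set.mem_Ioi.mpr (by linarith : (0:ℝ) < y+1)) ht.le hs.le hts
  simp only [smul_eq_mul, Function.comp] at hconv
  have hzz : t*(x+1) + s*(y+1) = t*x + s*y + 1 := by ring_nf; linarith [hts]
  rw [hzz] at hconv
  have hGx : Real.log (Real.Gamma (x+1)) = Real.log x + Real.log (Real.Gamma x) := by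
    rw [Real.Gamma_add_one hx0.ne', Real.log_mul hx0.ne' (Real.Gamma_pos_of_pos hx0).ne']
  have hGy : Real.log (Real.Gamma (y+1)) = Real.log y + Real.log (Real.Gamma y) := by
    rw [Real.Gamma_add_one hy0.ne', Real.log_mul hy0.ne' (Real.Gamma_pos_of_pos hy0).ne']
  have hlog : t * Real.log x + s * Real.log y < Real.log (t*x + s*y) := by
    have := strictConcaveOn_log_Ioi.2 (Set.mem_Ioi.mpr hx0) (Set.mem_Ioi.mpr hy0) hxy ht hs hts
    simpa using this
  have h2 : Real.log (Real.Gamma (t*x+s*y+1))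
      = Real.log (t*x+s*y) + Real.log (Real.Gamma (t*x+s*y)) := by
    rw [h1, Real.log_mul hz0.ne' (Real.Gamma_pos_of_pos hz0).ne']
  rw [h2, hGx, hGy] at hconv
  linarith

lemma gamma_pair_lt {n : ℕ} {a b : ℝ} (ha : 0 < a) (hab : a < b) (hb : b ≤ (n:ℝ)/2) :
    Real.Gamma (b+1) * Real.Gamma ((n:ℝ) - b + 1) <
      Real.Gamma (a+1) * Real.Gamma ((n:ℝ) - a + 1) := by
  set x : ℝ := a + 1
  set y : ℝ := (n:ℝ) - a + 1
  set x' : ℝ := b + 1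
  set y' : ℝ := (n:ℝ) - b + 1
  have hx0 : 0 < x := by simp only [x]; linarith
  have hy'0 : 0 < y' := by simp only [y']; linarith
  have hxx' : x < x' := by simp only [x, x']; linarith
  have hx'y' : x' ≤ y' := by simp only [x', y']; linarith
  have hy'y : y' < y := by simp only [y, y']; linarith
  have hy0 : 0 < y := lt_trans hy'0 hy'y
  have hx'0 : 0 < x' := lt_trans hx0 hxx'
  have hxy : x < y := by
    calc x < x' := hxx'
      _ ≤ y' := hx'y'
      _ < y := hy'y
  -- t such that x' = t x + (1-t) y, then y' = (1-t) x + t y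
  set t : ℝ := (y - x') / (y - x) with ht_def
  have hyx : 0 < y - x := by linarith
  have ht0 : 0 < t := div_pos (by linarith) hyx
  have ht1 : t < 1 := (div_lt_one hyx).mpr (by linarith)
  have ht' : t * (y - x) = y - x' := by
    rw [ht_def]; field_simp
  have hx'eq : x' = t * x + (1 - t) * y := by linear_combination ht'
  have hy'eq : y' = (1 - t) * x + t * y := by
    have hsum : x + y = x' + y' := by simp only [x, y, x', y']; ring
    have : y' = x + y - x' := by linarith
    rw [this, hx'eq]; ring
  have h := strictConvexOn_log_Gamma'
  have h1 : Real.log (Real.Gamma x') <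
      t * Real.log (Real.Gamma x) + (1 - t) * Real.log (Real.Gamma y) := by
    rw [hx'eq]
    exact h.2 (Set.mem_Ioi.mpr hx0) (Set.mem_Ioi.mpr hy0) hxy.ne ht0 (by linarith) (by ring)
  have h2 : Real.log (Real.Gamma y') ≤
      (1 - t) * Real.log (Real.Gamma x) + t * Real.log (Real.Gamma y) := by
    rw [hy'eq]
    exact h.convexOn.2 (Set.mem_Ioi.mpr hx0) (Set.mem_Ioi.mpr hy0)
      (by linarith : (0:ℝ) ≤ 1 - t) ht0.le (by ring)
  have hsumlog : Real.log (Real.Gamma x') + Real.log (Real.Gamma y') <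
      Real.log (Real.Gamma x) + Real.log (Real.Gamma y) := by linarith
  have hGx := Real.Gamma_pos_of_pos hx0
  have hGy := Real.Gamma_pos_of_pos hy0
  have hGx' := Real.Gamma_pos_of_pos hx'0
  have hGy' := Real.Gamma_pos_of_pos hy'0
  have := Real.exp_lt_exp.mpr hsumlog
  rwa [Real.exp_add, Real.exp_add, Real.exp_log hGx, Real.exp_log hGy,
    Real.exp_log hGx', Real.exp_log hGy'] at this

/-- For every positive integer `n`, the map `α ↦ binom(n,α)` is strictly increasing on
`(0, n/2]`; equivalently, `x ↦ binom(n, 2^{-n}·n·x)` is increasing for `0 < x < 2^{n-1}`. -/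
theorem gbinom_strictMonoOn (n : ℕ) (hn : 0 < n) :
    StrictMonoOn (fun a : ℝ => gbinom n a) (Set.Ioc (0:ℝ) ((n : ℝ) / 2)) ∧
    MonotoneOn (fun x : ℝ => gbinom n ((2:ℝ) ^ (-(n : ℝ)) * (n : ℝ) * x))
      (Set.Ioo (0:ℝ) ((2:ℝ) ^ ((n : ℝ) - 1))) := by
  have hmain : StrictMonoOn (fun a : ℝ => gbinom n a) (Set.Ioc (0:ℝ) ((n : ℝ) / 2)) := by
    intro a ha b hb hab
    obtain ⟨ha0, _⟩ := ha
    obtain ⟨_, hb2⟩ := hb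
    have key := gamma_pair_lt (n := n) ha0 hab hb2
    have hpa : 0 < Real.Gamma (a+1) * Real.Gamma ((n:ℝ) - a + 1) :=
      mul_pos (Real.Gamma_pos_of_pos (by linarith))
        (Real.Gamma_pos_of_pos (by nlinarith [Nat.one_le_cast (α := ℝ) |>.mpr hn]))
    have hpb : 0 < Real.Gamma (b+1) * Real.Gamma ((n:ℝ) - b + 1) :=
      mul_pos (Real.Gamma_pos_of_pos (by linarith))
        (Real.Gamma_pos_of_pos (by nlinarith))
    have hfac : (0:ℝ) < (n.factorial : ℝ) := by positivity
    simp only [gbinom]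
    exact div_lt_div_of_pos_left hfac hpb key
  refine ⟨hmain, ?_⟩
  have hc : (0:ℝ) < (2:ℝ) ^ (-(n : ℝ)) * (n : ℝ) := by positivity
  intro x hx y hy hxy
  rcases eq_or_lt_of_le hxy with rfl | hlt
  · exact le_refl _
  have hmem : ∀ z : ℝ, z ∈ Set.Ioo (0:ℝ) ((2:ℝ) ^ ((n : ℝ) - 1)) →
      (2:ℝ) ^ (-(n : ℝ)) * (n : ℝ) * z ∈ Set.Ioc (0:ℝ) ((n:ℝ)/2) := by
    intro z hz
    constructor
    · have := hz.1; positivity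
    · have h2 : (2:ℝ) ^ (-(n : ℝ)) * (n : ℝ) * z < (2:ℝ) ^ (-(n : ℝ)) * (n : ℝ) * ((2:ℝ) ^ ((n : ℝ) - 1)) :=
        mul_lt_mul_of_pos_left hz.2 hc
      have h3 : (2:ℝ) ^ (-(n : ℝ)) * ((2:ℝ) ^ ((n : ℝ) - 1)) = 1/2 := by
        have he : -(n:ℝ) + ((n:ℝ) - 1) = -1 := by ring
        rw [← Real.rpow_add (by norm_num), he, Real.rpow_neg_one]
        norm_num
      refine le_of_lt ?_
      calc (2:ℝ) ^ (-(n : ℝ)) * (n : ℝ) * z < _ := h2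
        _ = (n:ℝ)/2 := by rw [mul_right_comm, h3]; ring
  exact (hmain (hmem x hx) (hmem y hy) (mul_lt_mul_of_pos_left hlt hc)).le
end
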